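/- arXiv:math/0302106 — 3 statements merged into one kernel-verified Lean document; each statement's English description precedes it below -/
import Mathlib

section
/- For n ≥ 1 and 2 ≤ k ≤ n, the numbers dpt(n,k) of decreasing planar trees on [1,n] with largest leaf at most k satisfy dpt(n, k−1) = Σ_{a=1}^{k−1} C(k−1, a) · dpt(a, a) · dpt(n−a, k−a). -/
/-- A decreasing planar tree on `[1,n]`, encoded by its parent function and
the rank of each non-root node among its siblings (see the paper). -/
structure DPT (n : ℕ) : Type where
  parent : ℕ → ℕ
  ord : ℕ → ℕ
  parent_mem : ∀ i, 1 ≤ i → i < n → i < parent i ∧ parent i ≤ n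
  ord_lt : ∀ i, 1 ≤ i → i < n →
    ord i < Nat.card {j : ℕ // 1 ≤ j ∧ j < n ∧ parent j = parent i}
  ord_inj : ∀ i j, 1 ≤ i → i < n → 1 ≤ j → j < n →
    parent i = parent j → ord i = ord j → i = j
  parent_out : ∀ i, i = 0 ∨ n ≤ i → parent i = 0
  ord_out : ∀ i, i = 0 ∨ n ≤ i → ord i = 0

/-- `i` is a leaf of `T`: no node has `i` as its parent. -/
def DPT.IsLeaf {n : ℕ} (T : DPT n) (i : ℕ) : Prop :=
  ∀ j, 1 ≤ j → j < n → T.parent j ≠ i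

/-- The largest leaf of `T` is at most `k`. -/
def DPT.LeafLe {n : ℕ} (T : DPT n) (k : ℕ) : Prop :=
  ∀ i, 1 ≤ i → i ≤ n → T.IsLeaf i → i ≤ k

/-- `dpt n k`: the number of decreasing planar trees on `[1,n]` whose largest
leaf is at most `k` (with `dpt 0 k = 1`). -/
noncomputable def dpt (n k : ℕ) : ℕ :=
  Nat.card {T : DPT n // T.LeafLe k}



namespace DPTaux


open Finset



noncomputable def emb (A : Finset ℕ) (i : ℕ) : ℕ :=
  if h : i - 1 < A.card ∧ 1 ≤ i then (A.orderIsoOfFin rfl ⟨i - 1, h.1⟩ : ℕ) else 0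

noncomputable def idx (A : Finset ℕ) (x : ℕ) : ℕ :=
  if h : x ∈ A then ((A.orderIsoOfFin rfl).symm ⟨x, h⟩).val + 1 else 0

theorem emb_mem {A : Finset ℕ} {i : ℕ} (h1 : 1 ≤ i) (h2 : i ≤ A.card) : emb A i ∈ A := by
  have h : i - 1 < A.card ∧ 1 ≤ i := ⟨by omega, h1⟩
  rw [emb, dif_pos h]; exact (A.orderIsoOfFin rfl ⟨i - 1, h.1⟩).2

theorem idx_mem {A : Finset ℕ} {x : ℕ} (h : x ∈ A) :
    1 ≤ idx A x ∧ idx A x ≤ A.card := by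
  rw [idx, dif_pos h]
  constructor
  · omega
  · have := ((A.orderIsoOfFin rfl).symm ⟨x, h⟩).2; omega

theorem idx_emb {A : Finset ℕ} {i : ℕ} (h1 : 1 ≤ i) (h2 : i ≤ A.card) :
    idx A (emb A i) = i := by
  have h : i - 1 < A.card ∧ 1 ≤ i := ⟨by omega, h1⟩
  rw [emb, dif_pos h, idx, dif_pos ((A.orderIsoOfFin rfl ⟨i - 1, h.1⟩).2)]
  have : (⟨((A.orderIsoOfFin rfl) ⟨i - 1, h.1⟩ : ℕ), (A.orderIsoOfFin rfl ⟨i - 1, h.1⟩).2⟩ :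
      {x // x ∈ A}) = (A.orderIsoOfFin rfl) ⟨i - 1, h.1⟩ := rfl
  rw [this, OrderIso.symm_apply_apply]
  simp only [Fin.val_mk]
  omega

theorem emb_idx {A : Finset ℕ} {x : ℕ} (h : x ∈ A) : emb A (idx A x) = x := by
  rw [idx, dif_pos h]
  set r := (A.orderIsoOfFin rfl).symm ⟨x, h⟩ with hr
  have hrb : r.val + 1 - 1 < A.card ∧ 1 ≤ r.val + 1 := ⟨by simp only [Nat.add_sub_cancel]; exact r.2, by omega⟩
  rw [emb, dif_pos hrb]
  have : (⟨r.val + 1 - 1, hrb.1⟩ : Fin A.card) = r := by ext; simp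
  rw [this, hr, OrderIso.apply_symm_apply]

theorem emb_lt_emb {A : Finset ℕ} {i j : ℕ} (h1 : 1 ≤ i) (h2 : i ≤ A.card)
    (h3 : 1 ≤ j) (h4 : j ≤ A.card) : emb A i < emb A j ↔ i < j := by
  have hi : i - 1 < A.card ∧ 1 ≤ i := ⟨by omega, h1⟩
  have hj : j - 1 < A.card ∧ 1 ≤ j := ⟨by omega, h3⟩
  rw [emb, dif_pos hi, emb, dif_pos hj]
  constructor
  · intro hlt
    by_contra hc
    push_neg at hc
    have : (⟨j-1, hj.1⟩ : Fin A.card) ≤ ⟨i-1, hi.1⟩ := by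
      simp [Fin.le_def]; omega
    have := (A.orderIsoOfFin rfl).monotone this
    rw [← Subtype.coe_le_coe] at this
    omega
  · intro hlt
    have : (⟨i-1, hi.1⟩ : Fin A.card) < ⟨j-1, hj.1⟩ := by
      simp [Fin.lt_def]; omega
    have := (A.orderIsoOfFin rfl).strictMono this
    rwa [← Subtype.coe_lt_coe] at this

theorem emb_inj {A : Finset ℕ} {i j : ℕ} (h1 : 1 ≤ i) (h2 : i ≤ A.card)
    (h3 : 1 ≤ j) (h4 : j ≤ A.card) (h : emb A i = emb A j) : i = j := by
  rcases lt_trichotomy i j with hc | hc | hc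
  · rw [← emb_lt_emb h1 h2 h3 h4] at hc; omega
  · exact hc
  · rw [← emb_lt_emb h3 h4 h1 h2] at hc; omega

theorem idx_lt_idx {A : Finset ℕ} {x y : ℕ} (hx : x ∈ A) (hy : y ∈ A) :
    idx A x < idx A y ↔ x < y := by
  have h1 := idx_mem hx; have h2 := idx_mem hy
  rw [← emb_lt_emb h1.1 h1.2 h2.1 h2.2, emb_idx hx, emb_idx hy]

theorem idx_inj {A : Finset ℕ} {x y : ℕ} (hx : x ∈ A) (hy : y ∈ A)
    (h : idx A x = idx A y) : x = y := by
  rcases lt_trichotomy x y with hc | hc | hc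
  · rw [← idx_lt_idx hx hy] at hc; omega
  · exact hc
  · rw [← idx_lt_idx hy hx] at hc; omega

theorem idx_rank {A : Finset ℕ} {x : ℕ} (h : x ∈ A) :
    idx A x = (A.filter (· < x)).card + 1 := by
  have key : A.filter (· < x) = (Finset.Icc 1 (idx A x - 1)).image (emb A) := by
    ext y
    simp only [mem_filter, mem_image, mem_Icc]
    constructor
    · rintro ⟨hyA, hyx⟩
      refine ⟨idx A y, ⟨(idx_mem hyA).1, ?_⟩, emb_idx hyA⟩
      have := (idx_lt_idx hyA h).2 hyx; omega
    · rintro ⟨i, ⟨hi1, hi2⟩, rfl⟩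
      have hia := idx_mem h
      have hi2' : i ≤ A.card := by omega
      have hmem := emb_mem hi1 hi2'
      refine ⟨hmem, ?_⟩
      rw [← emb_idx h]
      rw [emb_lt_emb hi1 hi2' hia.1 hia.2]; omega
  rw [key, Finset.card_image_of_injOn, Nat.card_Icc]
  · have := idx_mem h; omega
  · intro i hi j hj hij
    simp only [Finset.coe_Icc, Set.mem_Icc] at hi hj
    have hia := idx_mem h
    exact emb_inj hi.1 (by omega) hj.1 (by omega) hij

theorem idx_of_max {A : Finset ℕ} {x : ℕ} (hx : x ∈ A) (hmax : ∀ y ∈ A, y ≤ x) :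
    idx A x = A.card := by
  rw [idx_rank hx]
  have : A.filter (· < x) = A.erase x := by
    ext y; simp only [mem_filter, mem_erase]
    constructor
    · rintro ⟨h1, h2⟩; exact ⟨by omega, h1⟩
    · rintro ⟨h1, h2⟩; have := hmax y h2; exact ⟨h2, by omega⟩
  rw [this, Finset.card_erase_of_mem hx]
  have : 1 ≤ A.card := Finset.card_pos.2 ⟨x, hx⟩
  omega

theorem emb_card_of_max {A : Finset ℕ} {x : ℕ} (hx : x ∈ A) (hmax : ∀ y ∈ A, y ≤ x) :
    emb A A.card = x := by
  rw [← idx_of_max hx hmax, emb_idx hx]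

theorem emb_le_emb {A : Finset ℕ} {i j : ℕ} (h1 : 1 ≤ i) (h2 : i ≤ A.card)
    (h3 : 1 ≤ j) (h4 : j ≤ A.card) (h : i ≤ j) : emb A i ≤ emb A j := by
  rcases Nat.eq_or_lt_of_le h with rfl | hc
  · rfl
  · exact le_of_lt ((emb_lt_emb h1 h2 h3 h4).2 hc)


end DPTaux
namespace DPTaux
open Finset

/-- subtypes of bounded nat predicates are finite -/
theorem finite_of_bdd {P : ℕ → Prop} (N : ℕ) (h : ∀ j, P j → j < N) :
    Finite {j : ℕ // P j} := by
  apply Finite.of_injective (fun x : {j // P j} => (⟨x.1, h _ x.2⟩ : Fin N))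
  intro a b hab
  exact Subtype.ext (congrArg Fin.val hab)

/-- transfer `Nat.card` along an explicit bijection between nat subtypes -/
theorem card_congr' {P Q : ℕ → Prop} (f g : ℕ → ℕ)
    (hf : ∀ j, P j → Q (f j)) (hg : ∀ i, Q i → P (g i))
    (hgf : ∀ j, P j → g (f j) = j) (hfg : ∀ i, Q i → f (g i) = i) :
    Nat.card {j : ℕ // P j} = Nat.card {i : ℕ // Q i} := by
  apply Nat.card_congr
  exact ⟨fun x => ⟨f x.1, hf _ x.2⟩, fun y => ⟨g y.1, hg _ y.2⟩,
    fun x => Subtype.ext (hgf _ x.2), fun y => Subtype.ext (hfg _ y.2)⟩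

theorem card_add_one {P Q : ℕ → Prop} (f g : ℕ → ℕ) (x0 N : ℕ)
    (hPb : ∀ j, P j → j < N) (hQb : ∀ i, Q i → i < N)
    (hf : ∀ j, P j → j ≠ x0 → Q (f j)) (hg : ∀ i, Q i → P (g i))
    (hgf : ∀ j, P j → j ≠ x0 → g (f j) = j) (hfg : ∀ i, Q i → f (g i) = i)
    (hx0 : P x0) (hgx : ∀ i, Q i → g i ≠ x0) :
    Nat.card {j : ℕ // P j} = Nat.card {i : ℕ // Q i} + 1 := by
  have : Finite {i : ℕ // Q i} := finite_of_bdd N hQb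
  have e : {j : ℕ // P j} ≃ ({i : ℕ // Q i} ⊕ PUnit.{1}) := by
    refine ⟨fun x => if h : x.1 = x0 then Sum.inr PUnit.unit else Sum.inl ⟨f x.1, hf _ x.2 h⟩,
      fun y => Sum.rec (fun i => ⟨g i.1, hg _ i.2⟩) (fun _ => ⟨x0, hx0⟩) y, ?_, ?_⟩
    · intro x
      by_cases h : x.1 = x0
      · simp only [dif_pos h]; exact Subtype.ext h.symm
      · simp only [dif_neg h]; exact Subtype.ext (hgf _ x.2 h)
    · intro y
      rcases y with i | u
      · simp only; rw [dif_neg (hgx _ i.2)]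
        congr 1; exact Subtype.ext (hfg _ i.2)
      · simp only [dif_pos rfl]
        rfl
  rw [Nat.card_congr e, Nat.card_sum]
  simp

end DPTaux
namespace DPTaux
open Finset

theorem DPT.ext' {n : ℕ} {T S : DPT n} (h1 : T.parent = S.parent) (h2 : T.ord = S.ord) :
    T = S := by
  cases T; cases S; cases h1; cases h2; rfl

theorem sib_bdd {n : ℕ} (T : DPT n) (p : ℕ) :
    ∀ j, (1 ≤ j ∧ j < n ∧ T.parent j = p) → j < n := fun _ h => h.2.1

theorem sib_finite {n : ℕ} (T : DPT n) (p : ℕ) :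
    Finite {j : ℕ // 1 ≤ j ∧ j < n ∧ T.parent j = p} :=
  finite_of_bdd n (sib_bdd T p)

theorem sib_card_le {n : ℕ} (T : DPT n) (p : ℕ) :
    Nat.card {j : ℕ // 1 ≤ j ∧ j < n ∧ T.parent j = p} ≤ n := by
  have := sib_finite T p
  have h : Nat.card {j : ℕ // 1 ≤ j ∧ j < n ∧ T.parent j = p} ≤ Nat.card (Fin n) := by
    apply Nat.card_le_card_of_injective
      (fun x : {j : ℕ // 1 ≤ j ∧ j < n ∧ T.parent j = p} => (⟨x.1, x.2.2.1⟩ : Fin n))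
    intro a b hab; exact Subtype.ext (congrArg Fin.val hab)
  simpa using h

instance DPT.finite (n : ℕ) : Finite (DPT n) := by
  apply Finite.of_injective
    (fun T : DPT n => ((fun i : Fin n => (⟨T.parent i.1, by
        rcases Nat.eq_zero_or_pos i.1 with h | h
        · rw [T.parent_out i.1 (Or.inl h)]; omega
        · exact Nat.lt_succ_of_le (T.parent_mem i.1 h i.2).2⟩ : Fin (n+1))),
      (fun i : Fin n => (⟨T.ord i.1, by
        rcases Nat.eq_zero_or_pos i.1 with h | h
        · rw [T.ord_out i.1 (Or.inl h)]; omega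
        · exact Nat.lt_succ_of_le (le_trans (le_of_lt (T.ord_lt i.1 h i.2))
            (sib_card_le T _))⟩ : Fin (n+1)))))
  intro T S h
  simp only [Prod.mk.injEq] at h
  apply DPT.ext'
  · funext x
    by_cases hx : x < n
    · exact congrArg Fin.val (congrFun h.1 ⟨x, hx⟩)
    · rw [T.parent_out x (Or.inr (by omega)), S.parent_out x (Or.inr (by omega))]
  · funext x
    by_cases hx : x < n
    · exact congrArg Fin.val (congrFun h.2 ⟨x, hx⟩)
    · rw [T.ord_out x (Or.inr (by omega)), S.ord_out x (Or.inr (by omega))]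

/-- iterates of parent starting at 0 stay 0 -/
theorem iter_zero {n : ℕ} (T : DPT n) (m : ℕ) : T.parent^[m] 0 = 0 := by
  induction m with
  | zero => rfl
  | succ m ih => rw [Function.iterate_succ_apply, T.parent_out 0 (Or.inl rfl)]; exact ih

/-- strict increase along a nontrivial parent chain -/
theorem lt_of_chain {n : ℕ} (T : DPT n) :
    ∀ m x c, 1 ≤ x → x < n → 1 ≤ c → T.parent^[m+1] x = c → x < c := by
  intro m
  induction m with
  | zero =>
    intro x c hx1 hx2 hc h
    rw [Function.iterate_one] at h
    have := (T.parent_mem x hx1 hx2).1; omega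
  | succ m ih =>
    intro x c hx1 hx2 hc h
    rw [Function.iterate_succ_apply] at h
    have hp := T.parent_mem x hx1 hx2
    by_cases hpn : T.parent x < n
    · have := ih (T.parent x) c (by omega) hpn hc h
      omega
    · have hpe : T.parent x = n := by omega
      rw [hpe, Function.iterate_succ_apply, T.parent_out n (Or.inr le_rfl), iter_zero] at h
      omega

/-- every element of a "closed, bounded" set reaches the top element -/
theorem reach_top {n : ℕ} (T : DPT n) (S : Finset ℕ) (r : ℕ) (hr : r ∈ S)
    (hub : ∀ x ∈ S, x ≤ r)
    (hcl : ∀ x ∈ S, x ≠ r → T.parent x ∈ S ∧ x < T.parent x) :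
    ∀ x ∈ S, ∃ m, T.parent^[m] x = r := by
  have key : ∀ d : ℕ, ∀ x ∈ S, r - x ≤ d → ∃ m, T.parent^[m] x = r := by
    intro d
    induction d with
    | zero =>
      intro x hx hd
      have := hub x hx
      by_cases hxr : x = r
      · exact ⟨0, hxr⟩
      · have h1 := hcl x hx hxr
        have h2 := hub _ h1.1
        omega
    | succ d ih =>
      intro x hx hd
      by_cases hxr : x = r
      · exact ⟨0, hxr⟩
      · have h1 := hcl x hx hxr
        have h2 := hub _ h1.1
        obtain ⟨m, hm⟩ := ih (T.parent x) h1.1 (by omega)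
        exact ⟨m + 1, by rw [Function.iterate_succ_apply]; exact hm⟩
  intro x hx
  exact key (r - x) x hx le_rfl

end DPTaux
namespace DPTaux
open Finset

/-- complement of `A` in `[1,n]` -/
def Bc (n : ℕ) (A : Finset ℕ) : Finset ℕ := Finset.Icc 1 n \ A

section Ctx

variable {n k : ℕ} {A : Finset ℕ}

theorem mem_Bc {x : ℕ} : x ∈ Bc n A ↔ (1 ≤ x ∧ x ≤ n ∧ x ∉ A) := by
  simp [Bc, mem_sdiff, mem_Icc]; tauto

variable (hk2 : 2 ≤ k) (hkn : k ≤ n) (hA : A ⊆ Finset.Icc 1 (k-1)) (hne : A.Nonempty)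

include hA in
theorem memA_le {x : ℕ} (hx : x ∈ A) : 1 ≤ x ∧ x ≤ k - 1 := by
  have := hA hx; rw [mem_Icc] at this; exact this

include hA in
theorem cardA_le : A.card ≤ k - 1 := by
  have := Finset.card_le_card hA
  simpa [Nat.card_Icc] using this

include hk2 hA in
theorem k_notMem_A : k ∉ A := by
  intro h; have := memA_le hA h; omega

include hk2 hkn hA in
theorem card_Bc : (Bc n A).card = n - A.card := by
  rw [Bc, Finset.card_sdiff_of_subset]
  · simp [Nat.card_Icc]
  · exact hA.trans (Finset.Icc_subset_Icc_right (by omega))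

include hkn in
theorem n_mem_Bc (hk2 : 2 ≤ k) (hA : A ⊆ Finset.Icc 1 (k-1)) : n ∈ Bc n A := by
  rw [mem_Bc]
  refine ⟨by omega, le_rfl, fun h => ?_⟩
  have := memA_le hA h; omega

include hk2 hkn hA in
theorem k_mem_Bc : k ∈ Bc n A := by
  rw [mem_Bc]
  exact ⟨by omega, hkn, k_notMem_A hk2 hA⟩

include hne in
theorem M_mem : emb A A.card ∈ A := by
  have : 1 ≤ A.card := Finset.card_pos.2 hne
  exact emb_mem this le_rfl

include hne in
theorem M_max {x : ℕ} (hx : x ∈ A) : x ≤ emb A A.card := by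
  have h := idx_mem hx
  have : 1 ≤ A.card := Finset.card_pos.2 hne
  calc x = emb A (idx A x) := (emb_idx hx).symm
    _ ≤ emb A A.card := emb_le_emb h.1 h.2 this le_rfl h.2

include hne in
theorem idx_lt_card_of_ne_M {x : ℕ} (hx : x ∈ A) (hxM : x ≠ emb A A.card) :
    idx A x < A.card := by
  have h := idx_mem hx
  rcases Nat.eq_or_lt_of_le h.2 with he | hlt
  · exfalso; apply hxM; rw [← he, emb_idx hx]
  · exact hlt

include hk2 hkn hA in
theorem n_max_Bc {x : ℕ} (hx : x ∈ Bc n A) : x ≤ n := (mem_Bc.1 hx).2.1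

include hk2 hkn hA in
theorem emb_Bc_card : emb (Bc n A) ((Bc n A).card) = n :=
  emb_card_of_max (n_mem_Bc hkn hk2 hA) (fun _ hy => n_max_Bc hk2 hkn hA hy)

include hk2 hkn hA in
theorem idx_Bc_k : idx (Bc n A) k = k - A.card := by
  rw [idx_rank (k_mem_Bc hk2 hkn hA)]
  have hfil : (Bc n A).filter (· < k) = Finset.Icc 1 (k-1) \ A := by
    ext y
    simp only [mem_filter, mem_Bc, mem_sdiff, mem_Icc]
    constructor
    · rintro ⟨⟨h1, h2, h3⟩, h4⟩; exact ⟨⟨h1, by omega⟩, h3⟩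
    · rintro ⟨⟨h1, h2⟩, h3⟩; exact ⟨⟨h1, by omega, h3⟩, by omega⟩
  rw [hfil, Finset.card_sdiff_of_subset hA]
  have := cardA_le hA
  simp [Nat.card_Icc]; omega

include hk2 hkn hA in
theorem emb_Bc_ka : emb (Bc n A) (k - A.card) = k := by
  rw [← idx_Bc_k hk2 hkn hA, emb_idx (k_mem_Bc hk2 hkn hA)]

include hk2 hkn hA in
theorem ka_bounds : 1 ≤ k - A.card ∧ k - A.card ≤ (Bc n A).card := by
  have h1 := cardA_le hA
  have h2 := idx_mem (k_mem_Bc hk2 hkn hA)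
  rw [idx_Bc_k hk2 hkn hA] at h2
  exact h2

include hne in
theorem idx_M : idx A (emb A A.card) = A.card :=
  idx_of_max (M_mem hne) (fun _ hy => M_max hne hy)

end Ctx
end DPTaux

namespace DPTaux
open Finset

section Glue

variable {n k : ℕ} {A : Finset ℕ}

noncomputable def glueParent (n k : ℕ) (A : Finset ℕ)
    (T1 : DPT A.card) (T2 : DPT (n - A.card)) (x : ℕ) : ℕ :=
  if x ∈ A then (if x = emb A A.card then k else emb A (T1.parent (idx A x)))
  else if x ∈ Bc n A ∧ x ≠ n then emb (Bc n A) (T2.parent (idx (Bc n A) x)) else 0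

noncomputable def glueN (n k : ℕ) (A : Finset ℕ) (T2 : DPT (n - A.card)) : ℕ :=
  Nat.card {j : ℕ // 1 ≤ j ∧ j < n - A.card ∧ T2.parent j = k - A.card}

noncomputable def glueOrd (n k : ℕ) (A : Finset ℕ)
    (T1 : DPT A.card) (T2 : DPT (n - A.card)) (x : ℕ) : ℕ :=
  if x ∈ A then (if x = emb A A.card then glueN n k A T2 else T1.ord (idx A x))
  else if x ∈ Bc n A ∧ x ≠ n then T2.ord (idx (Bc n A) x) else 0

variable (hk2 : 2 ≤ k) (hkn : k ≤ n) (hA : A ⊆ Finset.Icc 1 (k-1)) (hne : A.Nonempty)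
variable (T1 : DPT A.card) (T2 : DPT (n - A.card))

include hne in
theorem gp_M : glueParent n k A T1 T2 (emb A A.card) = k := by
  rw [glueParent, if_pos (M_mem hne), if_pos rfl]

include hne in
theorem go_M : glueOrd n k A T1 T2 (emb A A.card) = glueN n k A T2 := by
  rw [glueOrd, if_pos (M_mem hne), if_pos rfl]

theorem gp_A {x : ℕ} (hx : x ∈ A) (hxM : x ≠ emb A A.card) :
    glueParent n k A T1 T2 x = emb A (T1.parent (idx A x)) := by
  rw [glueParent, if_pos hx, if_neg hxM]

theorem go_A {x : ℕ} (hx : x ∈ A) (hxM : x ≠ emb A A.card) :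
    glueOrd n k A T1 T2 x = T1.ord (idx A x) := by
  rw [glueOrd, if_pos hx, if_neg hxM]

theorem gp_B {x : ℕ} (hx : x ∈ Bc n A) (hxn : x ≠ n) :
    glueParent n k A T1 T2 x = emb (Bc n A) (T2.parent (idx (Bc n A) x)) := by
  rw [glueParent, if_neg (mem_Bc.1 hx).2.2, if_pos ⟨hx, hxn⟩]

theorem go_B {x : ℕ} (hx : x ∈ Bc n A) (hxn : x ≠ n) :
    glueOrd n k A T1 T2 x = T2.ord (idx (Bc n A) x) := by
  rw [glueOrd, if_neg (mem_Bc.1 hx).2.2, if_pos ⟨hx, hxn⟩]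

theorem gp_out {x : ℕ} (hx : x ∉ A) (hx2 : ¬(x ∈ Bc n A ∧ x ≠ n)) :
    glueParent n k A T1 T2 x = 0 := by
  rw [glueParent, if_neg hx, if_neg hx2]

theorem go_out {x : ℕ} (hx : x ∉ A) (hx2 : ¬(x ∈ Bc n A ∧ x ≠ n)) :
    glueOrd n k A T1 T2 x = 0 := by
  rw [glueOrd, if_neg hx, if_neg hx2]

include hk2 hkn hA in
theorem memA_lt_n {x : ℕ} (hx : x ∈ A) : x < n := by
  have := memA_le hA hx; omega

include hne in
theorem gpA_spec {x : ℕ} (hx : x ∈ A) (hxM : x ≠ emb A A.card) :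
    glueParent n k A T1 T2 x ∈ A ∧ x < glueParent n k A T1 T2 x ∧
      idx A (glueParent n k A T1 T2 x) = T1.parent (idx A x) := by
  have hi1 := (idx_mem hx).1
  have hi2 := idx_lt_card_of_ne_M hne hx hxM
  have hp := T1.parent_mem (idx A x) hi1 hi2
  rw [gp_A T1 T2 hx hxM]
  have hmem : emb A (T1.parent (idx A x)) ∈ A := emb_mem (by omega) hp.2
  refine ⟨hmem, ?_, idx_emb (by omega) hp.2⟩
  calc x = emb A (idx A x) := (emb_idx hx).symm
    _ < emb A (T1.parent (idx A x)) := by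
        rw [emb_lt_emb hi1 (by omega) (by omega) hp.2]; exact hp.1

include hk2 hkn hA in
theorem gpB_spec {x : ℕ} (hx : x ∈ Bc n A) (hxn : x ≠ n) :
    glueParent n k A T1 T2 x ∈ Bc n A ∧ x < glueParent n k A T1 T2 x ∧
      idx (Bc n A) (glueParent n k A T1 T2 x) = T2.parent (idx (Bc n A) x) := by
  have hBc := card_Bc hk2 hkn hA
  have hi1 := (idx_mem hx).1
  have hi2 : idx (Bc n A) x < (Bc n A).card := by
    rcases Nat.eq_or_lt_of_le (idx_mem hx).2 with he | h
    · exfalso; apply hxn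
      have : emb (Bc n A) (idx (Bc n A) x) = emb (Bc n A) ((Bc n A).card) := by rw [he]
      rw [emb_idx hx, emb_Bc_card hk2 hkn hA] at this; exact this
    · exact h
  have hp := T2.parent_mem (idx (Bc n A) x) hi1 (by omega)
  rw [gp_B T1 T2 hx hxn]
  have hmem : emb (Bc n A) (T2.parent (idx (Bc n A) x)) ∈ Bc n A :=
    emb_mem (by omega) (by omega)
  refine ⟨hmem, ?_, idx_emb (by omega) (by omega)⟩
  calc x = emb (Bc n A) (idx (Bc n A) x) := (emb_idx hx).symm
    _ < emb (Bc n A) (T2.parent (idx (Bc n A) x)) := by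
        rw [emb_lt_emb hi1 (by omega) (by omega) (by omega)]; exact hp.1

include hk2 hkn hA hne in
theorem branch_of_parent {j p : ℕ} (hj1 : 1 ≤ j) (hj2 : j < n)
    (hp : glueParent n k A T1 T2 j = p) :
    (j ∈ A ∧ j ≠ emb A A.card ∧ p ∈ A ∧ idx A p = T1.parent (idx A j)) ∨
    (j = emb A A.card ∧ p = k) ∨
    (j ∈ Bc n A ∧ j ≠ n ∧ p ∈ Bc n A ∧
      idx (Bc n A) p = T2.parent (idx (Bc n A) j)) := by
  by_cases hjA : j ∈ A
  · by_cases hjM : j = emb A A.card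
    · right; left; exact ⟨hjM, by rw [← hp, hjM, gp_M hne]⟩
    · left
      have hs := gpA_spec (k := k) hne T1 T2 hjA hjM
      rw [hp] at hs
      exact ⟨hjA, hjM, hs.1, hs.2.2⟩
  · right; right
    have hjB : j ∈ Bc n A := mem_Bc.2 ⟨hj1, by omega, hjA⟩
    have hs := gpB_spec hk2 hkn hA T1 T2 hjB (by omega)
    rw [hp] at hs
    exact ⟨hjB, by omega, hs.1, hs.2.2⟩

include hk2 hkn hA in
theorem idx_lt_card_Bc {x : ℕ} (hx : x ∈ Bc n A) (hxn : x ≠ n) :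
    idx (Bc n A) x < (Bc n A).card := by
  rcases Nat.eq_or_lt_of_le (idx_mem hx).2 with he | h
  · exfalso; apply hxn
    have : emb (Bc n A) (idx (Bc n A) x) = emb (Bc n A) ((Bc n A).card) := by rw [he]
    rw [emb_idx hx, emb_Bc_card hk2 hkn hA] at this; exact this
  · exact h

include hk2 hkn hA hne in
theorem sibcard_A {p : ℕ} (hp : p ∈ A) :
    Nat.card {j : ℕ // 1 ≤ j ∧ j < n ∧ glueParent n k A T1 T2 j = p}
      = Nat.card {i : ℕ // 1 ≤ i ∧ i < A.card ∧ T1.parent i = idx A p} := by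
  have hknA := k_notMem_A hk2 hA
  apply card_congr' (idx A) (emb A)
  · rintro j ⟨hj1, hj2, hgp⟩
    rcases branch_of_parent hk2 hkn hA hne T1 T2 hj1 hj2 hgp with
      ⟨hjA, hjM, _, heq⟩ | ⟨_, rfl⟩ | ⟨_, _, hpB, _⟩
    · exact ⟨(idx_mem hjA).1, idx_lt_card_of_ne_M hne hjA hjM, heq.symm⟩
    · exact absurd hp hknA
    · exact absurd hp (mem_Bc.1 hpB).2.2
  · rintro i ⟨hi1, hi2, hieq⟩
    have hmem : emb A i ∈ A := emb_mem hi1 (le_of_lt hi2)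
    have hMne : emb A i ≠ emb A A.card := by
      intro h
      have : 1 ≤ A.card := Finset.card_pos.2 hne
      have := emb_inj hi1 (le_of_lt hi2) this le_rfl h
      omega
    refine ⟨(memA_le hA hmem).1, memA_lt_n hk2 hkn hA hmem, ?_⟩
    rw [gp_A T1 T2 hmem hMne, idx_emb hi1 (le_of_lt hi2), hieq, emb_idx hp]
  · rintro j ⟨hj1, hj2, hgp⟩
    rcases branch_of_parent hk2 hkn hA hne T1 T2 hj1 hj2 hgp with
      ⟨hjA, _, _, _⟩ | ⟨_, rfl⟩ | ⟨_, _, hpB, _⟩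
    · exact emb_idx hjA
    · exact absurd hp hknA
    · exact absurd hp (mem_Bc.1 hpB).2.2
  · rintro i ⟨hi1, hi2, _⟩
    exact idx_emb hi1 (le_of_lt hi2)

include hk2 hkn hA hne in
theorem sibcard_B {p : ℕ} (hp : p ∈ Bc n A) (hpk : p ≠ k) :
    Nat.card {j : ℕ // 1 ≤ j ∧ j < n ∧ glueParent n k A T1 T2 j = p}
      = Nat.card {i : ℕ // 1 ≤ i ∧ i < n - A.card ∧ T2.parent i = idx (Bc n A) p} := by
  have hBc := card_Bc hk2 hkn hA
  apply card_congr' (idx (Bc n A)) (emb (Bc n A))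
  · rintro j ⟨hj1, hj2, hgp⟩
    rcases branch_of_parent hk2 hkn hA hne T1 T2 hj1 hj2 hgp with
      ⟨_, _, hpA, _⟩ | ⟨_, rfl⟩ | ⟨hjB, hjn, _, heq⟩
    · exact absurd hpA (mem_Bc.1 hp).2.2
    · exact absurd rfl hpk
    · refine ⟨(idx_mem hjB).1, ?_, heq.symm⟩
      have := idx_lt_card_Bc hk2 hkn hA hjB hjn; omega
  · rintro i ⟨hi1, hi2, hieq⟩
    have hi2' : i ≤ (Bc n A).card := by omega
    have hmem : emb (Bc n A) i ∈ Bc n A := emb_mem hi1 hi2'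
    have hnen : emb (Bc n A) i ≠ n := by
      intro h
      have h' : emb (Bc n A) i = emb (Bc n A) ((Bc n A).card) := by
        rw [emb_Bc_card hk2 hkn hA]; exact h
      have := emb_inj hi1 hi2' (by omega) le_rfl h'
      omega
    have hm := mem_Bc.1 hmem
    refine ⟨hm.1, by omega, ?_⟩
    rw [gp_B T1 T2 hmem hnen, idx_emb hi1 hi2', hieq, emb_idx hp]
  · rintro j ⟨hj1, hj2, hgp⟩
    rcases branch_of_parent hk2 hkn hA hne T1 T2 hj1 hj2 hgp with
      ⟨_, _, hpA, _⟩ | ⟨_, rfl⟩ | ⟨hjB, _, _, _⟩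
    · exact absurd hpA (mem_Bc.1 hp).2.2
    · exact absurd rfl hpk
    · exact emb_idx hjB
  · rintro i ⟨hi1, hi2, _⟩
    exact idx_emb hi1 (by omega)

include hk2 hkn hA hne in
theorem sibcard_k :
    Nat.card {j : ℕ // 1 ≤ j ∧ j < n ∧ glueParent n k A T1 T2 j = k}
      = glueN n k A T2 + 1 := by
  have hBc := card_Bc hk2 hkn hA
  have hMA := M_mem hne
  apply card_add_one (idx (Bc n A)) (emb (Bc n A)) (emb A A.card) n
  · rintro j ⟨_, hj2, _⟩; exact hj2
  · rintro i ⟨_, hi2, _⟩; omega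
  · rintro j ⟨hj1, hj2, hgp⟩ hjM
    rcases branch_of_parent hk2 hkn hA hne T1 T2 hj1 hj2 hgp with
      ⟨_, _, hpA, _⟩ | ⟨hjM', _⟩ | ⟨hjB, hjn, _, heq⟩
    · exact absurd hpA (k_notMem_A hk2 hA)
    · exact absurd hjM' hjM
    · refine ⟨(idx_mem hjB).1, ?_, ?_⟩
      · have := idx_lt_card_Bc hk2 hkn hA hjB hjn; omega
      · rw [← heq, idx_Bc_k hk2 hkn hA]
  · rintro i ⟨hi1, hi2, hieq⟩
    have hi2' : i ≤ (Bc n A).card := by omega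
    have hmem : emb (Bc n A) i ∈ Bc n A := emb_mem hi1 hi2'
    have hnen : emb (Bc n A) i ≠ n := by
      intro h
      have h' : emb (Bc n A) i = emb (Bc n A) ((Bc n A).card) := by
        rw [emb_Bc_card hk2 hkn hA]; exact h
      have := emb_inj hi1 hi2' (by omega) le_rfl h'
      omega
    have hm := mem_Bc.1 hmem
    refine ⟨hm.1, by omega, ?_⟩
    rw [gp_B T1 T2 hmem hnen, idx_emb hi1 hi2', hieq, emb_Bc_ka hk2 hkn hA]
  · rintro j ⟨hj1, hj2, hgp⟩ hjM
    rcases branch_of_parent hk2 hkn hA hne T1 T2 hj1 hj2 hgp with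
      ⟨_, _, hpA, _⟩ | ⟨hjM', _⟩ | ⟨hjB, _, _, _⟩
    · exact absurd hpA (k_notMem_A hk2 hA)
    · exact absurd hjM' hjM
    · exact emb_idx hjB
  · rintro i ⟨hi1, hi2, _⟩
    exact idx_emb hi1 (by omega)
  · exact ⟨(memA_le hA hMA).1, memA_lt_n hk2 hkn hA hMA, gp_M hne T1 T2⟩
  · rintro i ⟨hi1, hi2, _⟩
    intro h
    have : emb (Bc n A) i ∈ Bc n A := emb_mem hi1 (by omega)
    rw [h] at this
    exact (mem_Bc.1 this).2.2 hMA

include hk2 hkn hA hne in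
theorem T2ord_lt_glueN {j : ℕ} (hj1 : 1 ≤ j) (hj2 : j < n - A.card)
    (hpj : T2.parent j = k - A.card) : T2.ord j < glueN n k A T2 := by
  have := T2.ord_lt j hj1 hj2
  rw [hpj] at this
  exact this

noncomputable def glue : DPT n where
  parent := glueParent n k A T1 T2
  ord := glueOrd n k A T1 T2
  parent_mem := by
    intro i h1 h2
    by_cases hiA : i ∈ A
    · by_cases hiM : i = emb A A.card
      · rw [hiM, gp_M hne]
        have := memA_le hA (M_mem hne)
        constructor
        · omega
        · exact hkn
      · have hs := gpA_spec (k := k) hne T1 T2 hiA hiM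
        have := memA_le hA hs.1
        exact ⟨hs.2.1, by omega⟩
    · have hiB : i ∈ Bc n A := mem_Bc.2 ⟨h1, by omega, hiA⟩
      have hs := gpB_spec hk2 hkn hA T1 T2 hiB (by omega)
      exact ⟨hs.2.1, (mem_Bc.1 hs.1).2.1⟩
  ord_lt := by
    intro i h1 h2
    by_cases hiA : i ∈ A
    · by_cases hiM : i = emb A A.card
      · rw [hiM, go_M hne, gp_M hne, sibcard_k hk2 hkn hA hne]
        omega
      · rw [go_A T1 T2 hiA hiM]
        have hs := gpA_spec (k := k) hne T1 T2 hiA hiM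
        rw [sibcard_A hk2 hkn hA hne T1 T2 hs.1, hs.2.2]
        exact T1.ord_lt (idx A i) (idx_mem hiA).1 (idx_lt_card_of_ne_M hne hiA hiM)
    · have hiB : i ∈ Bc n A := mem_Bc.2 ⟨h1, by omega, hiA⟩
      have hin : i ≠ n := by omega
      have hs := gpB_spec hk2 hkn hA T1 T2 hiB hin
      rw [go_B T1 T2 hiB hin]
      by_cases hpk : glueParent n k A T1 T2 i = k
      · rw [hpk, sibcard_k hk2 hkn hA hne]
        have hpj : T2.parent (idx (Bc n A) i) = k - A.card := by
          rw [← hs.2.2, hpk, idx_Bc_k hk2 hkn hA]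
        have := T2ord_lt_glueN hk2 hkn hA hne T2 (idx_mem hiB).1
          (by have := idx_lt_card_Bc hk2 hkn hA hiB hin
              have := card_Bc hk2 hkn hA; omega) hpj
        omega
      · rw [sibcard_B hk2 hkn hA hne T1 T2 hs.1 hpk, hs.2.2]
        exact T2.ord_lt (idx (Bc n A) i) (idx_mem hiB).1
          (by have := idx_lt_card_Bc hk2 hkn hA hiB hin
              have := card_Bc hk2 hkn hA; omega)
  ord_inj := by
    intro i j hi1 hi2 hj1 hj2 hpar hord
    have hBc := card_Bc hk2 hkn hA
    rcases branch_of_parent hk2 hkn hA hne T1 T2 hi1 hi2 (rfl : glueParent n k A T1 T2 i = _) with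
      ⟨hiA, hiM, hpA, hieq⟩ | ⟨hiM, hpk⟩ | ⟨hiB, hin, hpB, hieq⟩
    · rcases branch_of_parent hk2 hkn hA hne T1 T2 hj1 hj2 hpar.symm with
        ⟨hjA, hjM, _, hjeq⟩ | ⟨_, hpk⟩ | ⟨_, _, hpB, _⟩
      · rw [go_A T1 T2 hiA hiM, go_A T1 T2 hjA hjM] at hord
        have := T1.ord_inj (idx A i) (idx A j) (idx_mem hiA).1
          (idx_lt_card_of_ne_M hne hiA hiM) (idx_mem hjA).1
          (idx_lt_card_of_ne_M hne hjA hjM) (by rw [← hieq, ← hjeq]) hord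
        have := congrArg (emb A) this
        rwa [emb_idx hiA, emb_idx hjA] at this
      · rw [hpk] at hpA; exact absurd hpA (k_notMem_A hk2 hA)
      · exact absurd hpA (mem_Bc.1 hpB).2.2
    · rcases branch_of_parent hk2 hkn hA hne T1 T2 hj1 hj2 hpar.symm with
        ⟨_, _, hpA, _⟩ | ⟨hjM, _⟩ | ⟨hjB, hjn, _, hjeq⟩
      · rw [hpk] at hpA; exact absurd hpA (k_notMem_A hk2 hA)
      · rw [hiM, hjM]
      · exfalso
        rw [hiM, go_M hne, go_B T1 T2 hjB hjn] at hord
        have hpj : T2.parent (idx (Bc n A) j) = k - A.card := by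
          rw [← hjeq, hpk, idx_Bc_k hk2 hkn hA]
        have := T2ord_lt_glueN hk2 hkn hA hne T2 (idx_mem hjB).1
          (by have := idx_lt_card_Bc hk2 hkn hA hjB hjn; omega) hpj
        omega
    · rcases branch_of_parent hk2 hkn hA hne T1 T2 hj1 hj2 hpar.symm with
        ⟨_, _, hpA, _⟩ | ⟨hjM, hpk⟩ | ⟨hjB, hjn, _, hjeq⟩
      · exact absurd hpA (mem_Bc.1 hpB).2.2
      · exfalso
        rw [hjM, go_M hne, go_B T1 T2 hiB hin] at hord
        have hpj : T2.parent (idx (Bc n A) i) = k - A.card := by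
          rw [← hieq, hpk, idx_Bc_k hk2 hkn hA]
        have := T2ord_lt_glueN hk2 hkn hA hne T2 (idx_mem hiB).1
          (by have := idx_lt_card_Bc hk2 hkn hA hiB hin; omega) hpj
        omega
      · rw [go_B T1 T2 hiB hin, go_B T1 T2 hjB hjn] at hord
        have := T2.ord_inj (idx (Bc n A) i) (idx (Bc n A) j) (idx_mem hiB).1
          (by have := idx_lt_card_Bc hk2 hkn hA hiB hin; omega) (idx_mem hjB).1
          (by have := idx_lt_card_Bc hk2 hkn hA hjB hjn; omega)
          (by rw [← hieq, ← hjeq]) hord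
        have := congrArg (emb (Bc n A)) this
        rwa [emb_idx hiB, emb_idx hjB] at this
  parent_out := by
    intro i hi
    apply gp_out
    · intro h; have := memA_le hA h; omega
    · rintro ⟨h, hn⟩; have := mem_Bc.1 h; omega
  ord_out := by
    intro i hi
    apply go_out
    · intro h; have := memA_le hA h; omega
    · rintro ⟨h, hn⟩; have := mem_Bc.1 h; omega

include hk2 hkn hA hne in
theorem glue_leafLe (h2 : T2.LeafLe (k - A.card)) :
    (glue hk2 hkn hA hne T1 T2).LeafLe (k - 1) := by
  intro x hx1 hxn hleaf
  have hBc := card_Bc hk2 hkn hA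
  rw [DPT.IsLeaf] at hleaf
  show x ≤ k - 1
  by_cases hxA : x ∈ A
  · exact (memA_le hA hxA).2
  · have hxB : x ∈ Bc n A := mem_Bc.2 ⟨hx1, hxn, hxA⟩
    by_cases hxk : x = k
    · exfalso
      have hMA := M_mem hne
      apply hleaf (emb A A.card) (memA_le hA hMA).1 (memA_lt_n hk2 hkn hA hMA)
      show glueParent n k A T1 T2 _ = x
      rw [gp_M hne, hxk]
    · by_cases hxnn : x = n
      · exfalso
        have hcA := cardA_le hA
        have hroot_leaf : T2.IsLeaf (n - A.card) := by
          intro j hj1 hj2 hpj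
          have hj2' : j < (Bc n A).card := by omega
          have hmem : emb (Bc n A) j ∈ Bc n A := emb_mem hj1 (le_of_lt hj2')
          have hnen : emb (Bc n A) j ≠ n := by
            intro h
            have h' : emb (Bc n A) j = emb (Bc n A) ((Bc n A).card) := by
              rw [emb_Bc_card hk2 hkn hA]; exact h
            have := emb_inj hj1 (le_of_lt hj2') (by omega) le_rfl h'
            omega
          apply hleaf (emb (Bc n A) j) (mem_Bc.1 hmem).1
            (by have := (mem_Bc.1 hmem).2.1; omega)
          show glueParent n k A T1 T2 _ = x
          rw [gp_B T1 T2 hmem hnen, idx_emb hj1 (le_of_lt hj2'), hpj]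
          rw [show n - A.card = (Bc n A).card from by omega, emb_Bc_card hk2 hkn hA, hxnn]
        have hle := h2 (n - A.card) (by omega) le_rfl hroot_leaf
        have : n ≤ k := by omega
        exact hxk (by omega)
      · -- x ∈ Bc, x ≠ k, x ≠ n : x corresponds to a T2-leaf
        have hq := idx_mem hxB
        have hq2 : idx (Bc n A) x < (Bc n A).card := idx_lt_card_Bc hk2 hkn hA hxB hxnn
        have hqleaf : T2.IsLeaf (idx (Bc n A) x) := by
          intro j hj1 hj2 hpj
          have hj2' : j < (Bc n A).card := by omega
          have hmem : emb (Bc n A) j ∈ Bc n A := emb_mem hj1 (le_of_lt hj2')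
          have hnen : emb (Bc n A) j ≠ n := by
            intro h
            have h' : emb (Bc n A) j = emb (Bc n A) ((Bc n A).card) := by
              rw [emb_Bc_card hk2 hkn hA]; exact h
            have := emb_inj hj1 (le_of_lt hj2') (by omega) le_rfl h'
            omega
          apply hleaf (emb (Bc n A) j) (mem_Bc.1 hmem).1
            (by have := (mem_Bc.1 hmem).2.1; omega)
          show glueParent n k A T1 T2 _ = x
          rw [gp_B T1 T2 hmem hnen, idx_emb hj1 (le_of_lt hj2'), hpj, emb_idx hxB]
        have hle := h2 (idx (Bc n A) x) hq.1 (by omega) hqleaf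
        have hka := ka_bounds hk2 hkn hA
        have : x ≤ k := by
          calc x = emb (Bc n A) (idx (Bc n A) x) := (emb_idx hxB).symm
            _ ≤ emb (Bc n A) (k - A.card) := emb_le_emb hq.1 (by omega) hka.1 hka.2 hle
            _ = k := emb_Bc_ka hk2 hkn hA
        omega

end Glue
end DPTaux

namespace DPTaux
open Finset

section Decomp

variable {n k : ℕ} (T : DPT n)
variable (hk2 : 2 ≤ k) (hkn : k ≤ n)

include hk2 hkn in
theorem exists_maxchild (hT : T.LeafLe (k-1)) :
    ∃ c, (1 ≤ c ∧ c < n ∧ T.parent c = k) ∧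
      (∀ j, 1 ≤ j → j < n → T.parent j = k → T.ord j ≤ T.ord c) := by
  classical
  have hnotleaf : ¬ T.IsLeaf k := by
    intro h
    have := hT k (by omega) hkn h
    omega
  rw [DPT.IsLeaf] at hnotleaf
  push_neg at hnotleaf
  obtain ⟨j0, hj1, hj2, hj3⟩ := hnotleaf
  set Chil := (Finset.range n).filter (fun j => 1 ≤ j ∧ T.parent j = k) with hChil
  have hne : Chil.Nonempty := ⟨j0, by simp [hChil, Finset.mem_filter, Finset.mem_range]; omega⟩
  obtain ⟨c, hc, hmax⟩ := Finset.exists_max_image Chil T.ord hne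
  simp only [hChil, Finset.mem_filter, Finset.mem_range] at hc
  refine ⟨c, ⟨hc.2.1, hc.1, hc.2.2⟩, ?_⟩
  intro j h1 h2 h3
  exact hmax j (by simp [hChil, Finset.mem_filter, Finset.mem_range]; omega)

variable {c : ℕ} (hc : 1 ≤ c ∧ c < n ∧ T.parent c = k)
    (hcmax : ∀ j, 1 ≤ j → j < n → T.parent j = k → T.ord j ≤ T.ord c)

open Classical in
/-- the set of descendants of `c` (including `c`) -/
noncomputable def descSet : Finset ℕ :=
  (Finset.Icc 1 n).filter (fun x => ∃ m, T.parent^[m] x = c)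

include hc in
theorem c_lt_k : c < k := by
  have := T.parent_mem c hc.1 hc.2.1
  rw [hc.2.2] at this
  exact this.1

include hc in
theorem c_mem_descSet : c ∈ descSet T (c := c) := by
  classical
  rw [descSet, Finset.mem_filter, Finset.mem_Icc]
  exact ⟨⟨hc.1, by omega⟩, 0, rfl⟩

include hc in
theorem descSet_ub {x : ℕ} (hx : x ∈ descSet T (c := c)) : x ≤ c := by
  classical
  rw [descSet, Finset.mem_filter, Finset.mem_Icc] at hx
  obtain ⟨⟨hx1, hx2⟩, m, hm⟩ := hx
  rcases Nat.eq_zero_or_pos m with rfl | hmp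
  · simp at hm; omega
  · by_cases hxn : x = n
    · exfalso
      obtain ⟨m', rfl⟩ : ∃ m', m = m' + 1 := ⟨m - 1, by omega⟩
      rw [hxn, Function.iterate_succ_apply, T.parent_out n (Or.inr le_rfl), iter_zero] at hm
      omega
    · obtain ⟨m', rfl⟩ : ∃ m', m = m' + 1 := ⟨m - 1, by omega⟩
      have := lt_of_chain T m' x c hx1 (by omega) hc.1 hm
      omega

include hc hk2 in
theorem descSet_sub : descSet T (c := c) ⊆ Finset.Icc 1 (k-1) := by
  classical
  intro x hx
  have h1 := descSet_ub T hc hx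
  have h2 := c_lt_k T hc
  rw [descSet, Finset.mem_filter, Finset.mem_Icc] at hx
  rw [Finset.mem_Icc]
  omega

include hc in
theorem descSet_ne : (descSet T (c := c)).Nonempty := ⟨c, c_mem_descSet T hc⟩

include hc in
theorem emb_descSet_card : emb (descSet T (c := c)) (descSet T (c := c)).card = c :=
  emb_card_of_max (c_mem_descSet T hc) (fun _ hy => descSet_ub T hc hy)

theorem descSet_closed_down {j : ℕ} (hj1 : 1 ≤ j) (hj2 : j < n)
    (hp : T.parent j ∈ descSet T (c := c)) : j ∈ descSet T (c := c) := by
  classical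
  rw [descSet, Finset.mem_filter, Finset.mem_Icc] at hp ⊢
  obtain ⟨_, m, hm⟩ := hp
  exact ⟨⟨hj1, by omega⟩, m + 1, by rw [Function.iterate_succ_apply]; exact hm⟩

include hc in
theorem descSet_parent_mem {x : ℕ} (hx : x ∈ descSet T (c := c)) (hxc : x ≠ c) :
    T.parent x ∈ descSet T (c := c) := by
  classical
  have hub := descSet_ub T hc hx
  rw [descSet, Finset.mem_filter, Finset.mem_Icc] at hx ⊢
  obtain ⟨⟨hx1, hx2⟩, m, hm⟩ := hx
  rcases Nat.eq_zero_or_pos m with rfl | hmp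
  · simp at hm; exact absurd hm hxc
  · obtain ⟨m', rfl⟩ : ∃ m', m = m' + 1 := ⟨m - 1, by omega⟩
    rw [Function.iterate_succ_apply] at hm
    have hpm := T.parent_mem x hx1 (by omega)
    exact ⟨⟨by omega, by omega⟩, m', hm⟩

include hc hk2 in
theorem k_notin_descSet : k ∉ descSet T (c := c) := by
  intro h
  have := descSet_ub T hc h
  have := c_lt_k T hc
  omega

include hc hcmax in
theorem natCard_sib_k :
    Nat.card {j : ℕ // 1 ≤ j ∧ j < n ∧ T.parent j = k} = T.ord c + 1 := by
  have hfin : Finite {j : ℕ // 1 ≤ j ∧ j < n ∧ T.parent j = k} := sib_finite T k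
  apply le_antisymm
  · have h : Nat.card {j : ℕ // 1 ≤ j ∧ j < n ∧ T.parent j = k}
        ≤ Nat.card (Fin (T.ord c + 1)) := by
      apply Nat.card_le_card_of_injective
        (fun x : {j : ℕ // 1 ≤ j ∧ j < n ∧ T.parent j = k} =>
          (⟨T.ord x.1, by have := hcmax x.1 x.2.1 x.2.2.1 x.2.2.2; omega⟩ : Fin (T.ord c + 1)))
      intro x y hxy
      apply Subtype.ext
      exact T.ord_inj x.1 y.1 x.2.1 x.2.2.1 y.2.1 y.2.2.1 (by rw [x.2.2.2, y.2.2.2])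
        (congrArg Fin.val hxy)
    simpa using h
  · have := T.ord_lt c hc.1 hc.2.1
    rw [hc.2.2] at this
    omega

end Decomp

section DecompTrees

variable {n k : ℕ} (T : DPT n)

noncomputable def d1p (c : ℕ) (i : ℕ) : ℕ :=
  if 1 ≤ i ∧ i < (descSet T (c := c)).card then idx (descSet T (c := c)) (T.parent (emb (descSet T (c := c)) i)) else 0

noncomputable def d1o (c : ℕ) (i : ℕ) : ℕ :=
  if 1 ≤ i ∧ i < (descSet T (c := c)).card then T.ord (emb (descSet T (c := c)) i) else 0

variable (hk2 : 2 ≤ k) (hkn : k ≤ n)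
variable {c : ℕ} (hc : 1 ≤ c ∧ c < n ∧ T.parent c = k)
    (hcmax : ∀ j, 1 ≤ j → j < n → T.parent j = k → T.ord j ≤ T.ord c)

include hkn hc in
theorem memAT_facts {x : ℕ} (hx : x ∈ (descSet T (c := c))) : 1 ≤ x ∧ x < n := by
  classical
  have h1 := descSet_ub T hc hx
  have h2 := c_lt_k T hc
  rw [descSet, Finset.mem_filter, Finset.mem_Icc] at hx
  omega

include hc in
theorem embAT_ne_c {i : ℕ} (h1 : 1 ≤ i) (h2 : i < (descSet T (c := c)).card) : emb (descSet T (c := c)) i ≠ c := by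
  intro h
  have h' : emb (descSet T (c := c)) i = emb (descSet T (c := c)) (descSet T (c := c)).card := by rw [emb_descSet_card T hc]; exact h
  have := emb_inj h1 (le_of_lt h2) (by omega) le_rfl h'
  omega

include hkn hc in
theorem d1p_facts {i : ℕ} (h1 : 1 ≤ i) (h2 : i < (descSet T (c := c)).card) :
    emb (descSet T (c := c)) i ∈ (descSet T (c := c)) ∧ T.parent (emb (descSet T (c := c)) i) ∈ (descSet T (c := c)) ∧
      d1p T c i = idx (descSet T (c := c)) (T.parent (emb (descSet T (c := c)) i)) ∧ i < d1p T c i ∧ d1p T c i ≤ (descSet T (c := c)).card := by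
  have hxm : emb (descSet T (c := c)) i ∈ (descSet T (c := c)) := emb_mem h1 (le_of_lt h2)
  have hxc : emb (descSet T (c := c)) i ≠ c := embAT_ne_c T hc h1 h2
  have hxf := memAT_facts T hkn hc hxm
  have hpm : T.parent (emb (descSet T (c := c)) i) ∈ (descSet T (c := c)) := descSet_parent_mem T hc hxm hxc
  have hlt : emb (descSet T (c := c)) i < T.parent (emb (descSet T (c := c)) i) := (T.parent_mem _ hxf.1 hxf.2).1
  have heq : d1p T c i = idx (descSet T (c := c)) (T.parent (emb (descSet T (c := c)) i)) := by rw [d1p, if_pos ⟨h1, h2⟩]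
  refine ⟨hxm, hpm, heq, ?_, by rw [heq]; exact (idx_mem hpm).2⟩
  rw [heq]
  have h' := (idx_lt_idx hxm hpm).2 hlt
  rwa [idx_emb h1 (le_of_lt h2)] at h'

include hk2 hkn hc in
theorem sibcard_d1 {p : ℕ} (hp : p ∈ (descSet T (c := c))) :
    Nat.card {j : ℕ // 1 ≤ j ∧ j < (descSet T (c := c)).card ∧ d1p T c j = idx (descSet T (c := c)) p}
      = Nat.card {j : ℕ // 1 ≤ j ∧ j < n ∧ T.parent j = p} := by
  apply card_congr' (emb (descSet T (c := c))) (idx (descSet T (c := c)))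
  · rintro j ⟨hj1, hj2, hjeq⟩
    have hf := d1p_facts T hkn hc hj1 hj2
    have : T.parent (emb (descSet T (c := c)) j) = p := by
      apply idx_inj hf.2.1 hp
      rw [← hf.2.2.1, hjeq]
    have hxf := memAT_facts T hkn hc hf.1
    exact ⟨hxf.1, hxf.2, this⟩
  · rintro j' ⟨hj1, hj2, hjeq⟩
    have hj'A : j' ∈ (descSet T (c := c)) := descSet_closed_down T hj1 hj2 (by rw [hjeq]; exact hp)
    have hj'c : j' ≠ c := by
      intro h
      rw [h, hc.2.2] at hjeq
      rw [← hjeq] at hp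
      exact k_notin_descSet T hk2 hc hp
    have hidx := idx_mem hj'A
    have hlt : idx (descSet T (c := c)) j' < (descSet T (c := c)).card := by
      rcases Nat.eq_or_lt_of_le hidx.2 with he | h
      · exfalso; apply hj'c
        have := congrArg (emb (descSet T (c := c))) he
        rwa [emb_idx hj'A, emb_descSet_card T hc] at this
      · exact h
    refine ⟨hidx.1, hlt, ?_⟩
    rw [d1p, if_pos ⟨hidx.1, hlt⟩, emb_idx hj'A, hjeq]
  · rintro j ⟨hj1, hj2, _⟩
    exact idx_emb hj1 (le_of_lt hj2)
  · rintro j' ⟨hj1, hj2, hjeq⟩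
    apply emb_idx
    exact descSet_closed_down T hj1 hj2 (by rw [hjeq]; exact hp)

include hk2 hkn hc in
noncomputable def decT1 : DPT (descSet T (c := c)).card where
  parent := d1p T c
  ord := d1o T c
  parent_mem := by
    intro i h1 h2
    have hf := d1p_facts T hkn hc h1 h2
    exact ⟨hf.2.2.2.1, hf.2.2.2.2⟩
  ord_lt := by
    intro i h1 h2
    have hf := d1p_facts T hkn hc h1 h2
    have heq : d1o T c i = T.ord (emb (descSet T (c := c)) i) := by rw [d1o, if_pos ⟨h1, h2⟩]
    rw [heq]
    have hxf := memAT_facts T hkn hc hf.1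
    have hlt := T.ord_lt (emb (descSet T (c := c)) i) hxf.1 hxf.2
    have hcard : Nat.card {j : ℕ // 1 ≤ j ∧ j < n ∧ T.parent j = T.parent (emb (descSet T (c := c)) i)}
        = Nat.card {j : ℕ // 1 ≤ j ∧ j < (descSet T (c := c)).card ∧ d1p T c j = d1p T c i} := by
      rw [show d1p T c i = idx (descSet T (c := c)) (T.parent (emb (descSet T (c := c)) i)) from hf.2.2.1]
      exact (sibcard_d1 T hk2 hkn hc hf.2.1).symm
    rw [← hcard]
    exact hlt
  ord_inj := by
    intro i j h1 h2 h3 h4 hpar hord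
    have hfi := d1p_facts T hkn hc h1 h2
    have hfj := d1p_facts T hkn hc h3 h4
    have hpeq : T.parent (emb (descSet T (c := c)) i) = T.parent (emb (descSet T (c := c)) j) := by
      apply idx_inj hfi.2.1 hfj.2.1
      rw [← hfi.2.2.1, ← hfj.2.2.1, hpar]
    have hoeq : T.ord (emb (descSet T (c := c)) i) = T.ord (emb (descSet T (c := c)) j) := by
      have hi : d1o T c i = T.ord (emb (descSet T (c := c)) i) := by rw [d1o, if_pos ⟨h1, h2⟩]
      have hj : d1o T c j = T.ord (emb (descSet T (c := c)) j) := by rw [d1o, if_pos ⟨h3, h4⟩]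
      rw [← hi, ← hj, hord]
    have hxfi := memAT_facts T hkn hc hfi.1
    have hxfj := memAT_facts T hkn hc hfj.1
    have := T.ord_inj _ _ hxfi.1 hxfi.2 hxfj.1 hxfj.2 hpeq hoeq
    have := congrArg (idx (descSet T (c := c))) this
    rwa [idx_emb h1 (le_of_lt h2), idx_emb h3 (le_of_lt h4)] at this
  parent_out := by
    intro i hi
    rw [d1p, if_neg (by omega)]
  ord_out := by
    intro i hi
    rw [d1o, if_neg (by omega)]

include hk2 hkn hc in
theorem decT1_leafLe : (decT1 T hk2 hkn hc).LeafLe (descSet T (c := c)).card := by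
  intro i h1 h2 _
  exact h2

end DecompTrees


section DecompTrees2

variable {n k : ℕ} (T : DPT n)

noncomputable def d2p (c : ℕ) (i : ℕ) : ℕ :=
  if 1 ≤ i ∧ i < n - (descSet T (c := c)).card then idx (Bc n (descSet T (c := c))) (T.parent (emb (Bc n (descSet T (c := c))) i)) else 0

noncomputable def d2o (c : ℕ) (i : ℕ) : ℕ :=
  if 1 ≤ i ∧ i < n - (descSet T (c := c)).card then T.ord (emb (Bc n (descSet T (c := c))) i) else 0

variable (hk2 : 2 ≤ k) (hkn : k ≤ n)
variable {c : ℕ} (hc : 1 ≤ c ∧ c < n ∧ T.parent c = k)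
    (hcmax : ∀ j, 1 ≤ j → j < n → T.parent j = k → T.ord j ≤ T.ord c)

include hk2 hkn hc in
theorem cardBT : (Bc n (descSet T (c := c))).card = n - (descSet T (c := c)).card := card_Bc hk2 hkn (descSet_sub T hk2 hc)

include hk2 hkn hc in
theorem notinAT_memBT {x : ℕ} (h1 : 1 ≤ x) (h2 : x ≤ n) (h3 : x ∉ (descSet T (c := c))) : x ∈ (Bc n (descSet T (c := c))) :=
  mem_Bc.2 ⟨h1, h2, h3⟩

include hk2 hkn hc in
theorem d2p_facts {i : ℕ} (h1 : 1 ≤ i) (h2 : i < n - (descSet T (c := c)).card) :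
    emb (Bc n (descSet T (c := c))) i ∈ (Bc n (descSet T (c := c))) ∧ emb (Bc n (descSet T (c := c))) i ≠ n ∧ 1 ≤ emb (Bc n (descSet T (c := c))) i ∧ emb (Bc n (descSet T (c := c))) i < n ∧ emb (Bc n (descSet T (c := c))) i ∉ (descSet T (c := c)) ∧
      T.parent (emb (Bc n (descSet T (c := c))) i) ∈ (Bc n (descSet T (c := c))) ∧ d2p T c i = idx (Bc n (descSet T (c := c))) (T.parent (emb (Bc n (descSet T (c := c))) i)) ∧
      i < d2p T c i ∧ d2p T c i ≤ n - (descSet T (c := c)).card := by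
  have hBc := cardBT T hk2 hkn hc
  have hi2 : i ≤ (Bc n (descSet T (c := c))).card := by omega
  have hxm : emb (Bc n (descSet T (c := c))) i ∈ (Bc n (descSet T (c := c))) := emb_mem h1 hi2
  have hxn : emb (Bc n (descSet T (c := c))) i ≠ n := by
    intro h
    have h' : emb (Bc n (descSet T (c := c))) i = emb (Bc n (descSet T (c := c))) (Bc n (descSet T (c := c))).card := by
      rw [emb_Bc_card hk2 hkn (descSet_sub T hk2 hc)]; exact h
    have := emb_inj h1 hi2 (by omega) le_rfl h'
    omega
  have hm := mem_Bc.1 hxm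
  have hpm := T.parent_mem (emb (Bc n (descSet T (c := c))) i) hm.1 (by omega)
  have hpnA : T.parent (emb (Bc n (descSet T (c := c))) i) ∉ (descSet T (c := c)) := by
    intro hmem
    exact hm.2.2 (descSet_closed_down T hm.1 (by omega) hmem)
  have hpB : T.parent (emb (Bc n (descSet T (c := c))) i) ∈ (Bc n (descSet T (c := c))) := mem_Bc.2 ⟨by omega, by omega, hpnA⟩
  have heq : d2p T c i = idx (Bc n (descSet T (c := c))) (T.parent (emb (Bc n (descSet T (c := c))) i)) := by rw [d2p, if_pos ⟨h1, h2⟩]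
  refine ⟨hxm, hxn, hm.1, by omega, hm.2.2, hpB, heq, ?_, ?_⟩
  · rw [heq]
    have h' := (idx_lt_idx hxm hpB).2 hpm.1
    rwa [idx_emb h1 hi2] at h'
  · rw [heq]
    have := (idx_mem hpB).2
    omega

include hk2 hkn hc in
theorem notmem_AT_of_parent_notmem {j : ℕ} (hj1 : 1 ≤ j) (hj2 : j < n)
    (hp : T.parent j ∉ (descSet T (c := c))) (hpk : T.parent j ≠ k) : j ∉ (descSet T (c := c)) := by
  intro hmem
  by_cases hjc : j = c
  · rw [hjc, hc.2.2] at hpk; exact hpk rfl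
  · exact hp (descSet_parent_mem T hc hmem hjc)

include hk2 hkn hc in
theorem sibcard_d2_ne {p : ℕ} (hp : p ∈ (Bc n (descSet T (c := c)))) (hpk : p ≠ k) :
    Nat.card {j : ℕ // 1 ≤ j ∧ j < n - (descSet T (c := c)).card ∧ d2p T c j = idx (Bc n (descSet T (c := c))) p}
      = Nat.card {j : ℕ // 1 ≤ j ∧ j < n ∧ T.parent j = p} := by
  have hBc := cardBT T hk2 hkn hc
  apply card_congr' (emb (Bc n (descSet T (c := c)))) (idx (Bc n (descSet T (c := c))))
  · rintro j ⟨hj1, hj2, hjeq⟩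
    have hf := d2p_facts T hk2 hkn hc hj1 hj2
    have : T.parent (emb (Bc n (descSet T (c := c))) j) = p := by
      apply idx_inj hf.2.2.2.2.2.1 hp
      rw [← hf.2.2.2.2.2.2.1, hjeq]
    exact ⟨hf.2.2.1, hf.2.2.2.1, this⟩
  · rintro j' ⟨hj1, hj2, hjeq⟩
    have hj'nA : j' ∉ (descSet T (c := c)) :=
      notmem_AT_of_parent_notmem T hk2 hkn hc hj1 hj2
        (by rw [hjeq]; exact (mem_Bc.1 hp).2.2) (by rw [hjeq]; exact hpk)
    have hj'B : j' ∈ (Bc n (descSet T (c := c))) := mem_Bc.2 ⟨hj1, by omega, hj'nA⟩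
    have hlt := idx_lt_card_Bc hk2 hkn (descSet_sub T hk2 hc) hj'B (by omega)
    refine ⟨(idx_mem hj'B).1, by omega, ?_⟩
    rw [d2p, if_pos ⟨(idx_mem hj'B).1, by omega⟩, emb_idx hj'B, hjeq]
  · rintro j ⟨hj1, hj2, _⟩
    exact idx_emb hj1 (by omega)
  · rintro j' ⟨hj1, hj2, hjeq⟩
    apply emb_idx
    exact mem_Bc.2 ⟨hj1, by omega,
      notmem_AT_of_parent_notmem T hk2 hkn hc hj1 hj2
        (by rw [hjeq]; exact (mem_Bc.1 hp).2.2) (by rw [hjeq]; exact hpk)⟩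

include hk2 hkn hc in
theorem sibcard_d2_k :
    Nat.card {j : ℕ // 1 ≤ j ∧ j < n ∧ T.parent j = k}
      = Nat.card {j : ℕ // 1 ≤ j ∧ j < n - (descSet T (c := c)).card ∧ d2p T c j = k - (descSet T (c := c)).card} + 1 := by
  have hBc := cardBT T hk2 hkn hc
  have hkB := k_mem_Bc hk2 hkn (descSet_sub T hk2 hc)
  apply card_add_one (idx (Bc n (descSet T (c := c)))) (emb (Bc n (descSet T (c := c)))) c n
  · rintro j ⟨_, hj2, _⟩; exact hj2
  · rintro j ⟨_, hj2, _⟩; omega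
  · rintro j' ⟨hj1, hj2, hjeq⟩ hj'c
    have hj'nA : j' ∉ (descSet T (c := c)) := by
      intro hmem
      apply k_notin_descSet T hk2 hc
      rw [← hjeq]
      exact descSet_parent_mem T hc hmem hj'c
    have hj'B : j' ∈ (Bc n (descSet T (c := c))) := mem_Bc.2 ⟨hj1, by omega, hj'nA⟩
    have hlt := idx_lt_card_Bc hk2 hkn (descSet_sub T hk2 hc) hj'B (by omega)
    refine ⟨(idx_mem hj'B).1, by omega, ?_⟩
    rw [d2p, if_pos ⟨(idx_mem hj'B).1, by omega⟩, emb_idx hj'B, hjeq,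
      idx_Bc_k hk2 hkn (descSet_sub T hk2 hc)]
  · rintro j ⟨hj1, hj2, hjeq⟩
    have hf := d2p_facts T hk2 hkn hc hj1 hj2
    have hpar : T.parent (emb (Bc n (descSet T (c := c))) j) = k := by
      apply idx_inj hf.2.2.2.2.2.1 hkB
      rw [← hf.2.2.2.2.2.2.1, hjeq, idx_Bc_k hk2 hkn (descSet_sub T hk2 hc)]
    exact ⟨hf.2.2.1, hf.2.2.2.1, hpar⟩
  · rintro j' ⟨hj1, hj2, hjeq⟩ hj'c
    apply emb_idx
    apply mem_Bc.2
    refine ⟨hj1, by omega, ?_⟩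
    intro hmem
    apply k_notin_descSet T hk2 hc
    rw [← hjeq]
    exact descSet_parent_mem T hc hmem hj'c
  · rintro j ⟨hj1, hj2, _⟩
    exact idx_emb hj1 (by omega)
  · exact ⟨hc.1, hc.2.1, hc.2.2⟩
  · rintro j ⟨hj1, hj2, _⟩
    intro h
    have hxm : emb (Bc n (descSet T (c := c))) j ∈ (Bc n (descSet T (c := c))) := emb_mem hj1 (by omega)
    rw [h] at hxm
    exact (mem_Bc.1 hxm).2.2 (c_mem_descSet T hc)

include hk2 hkn hc hcmax in
theorem d2card_eq :
    Nat.card {j : ℕ // 1 ≤ j ∧ j < n - (descSet T (c := c)).card ∧ d2p T c j = k - (descSet T (c := c)).card} = T.ord c := by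
  have h1 := sibcard_d2_k T hk2 hkn hc
  have h2 := natCard_sib_k T hc hcmax
  omega

include hk2 hkn hc hcmax in
noncomputable def decT2 : DPT (n - (descSet T (c := c)).card) where
  parent := d2p T c
  ord := d2o T c
  parent_mem := by
    intro i h1 h2
    have hf := d2p_facts T hk2 hkn hc h1 h2
    exact ⟨hf.2.2.2.2.2.2.2.1, hf.2.2.2.2.2.2.2.2⟩
  ord_lt := by
    intro i h1 h2
    have hf := d2p_facts T hk2 hkn hc h1 h2
    have heq : d2o T c i = T.ord (emb (Bc n (descSet T (c := c))) i) := by rw [d2o, if_pos ⟨h1, h2⟩]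
    rw [heq]
    by_cases hpk : T.parent (emb (Bc n (descSet T (c := c))) i) = k
    · have hdp : d2p T c i = k - (descSet T (c := c)).card := by
        rw [hf.2.2.2.2.2.2.1, hpk, idx_Bc_k hk2 hkn (descSet_sub T hk2 hc)]
      rw [hdp, d2card_eq T hk2 hkn hc hcmax]
      have hle := hcmax (emb (Bc n (descSet T (c := c))) i) hf.2.2.1 hf.2.2.2.1 hpk
      have hne : T.ord (emb (Bc n (descSet T (c := c))) i) ≠ T.ord c := by
        intro h
        have := T.ord_inj (emb (Bc n (descSet T (c := c))) i) c hf.2.2.1 hf.2.2.2.1 hc.1 hc.2.1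
          (by rw [hpk, hc.2.2]) h
        apply hf.2.2.2.2.1
        rw [this]
        exact c_mem_descSet T hc
      omega
    · have hcard := sibcard_d2_ne T hk2 hkn hc hf.2.2.2.2.2.1 hpk
      rw [show d2p T c i = idx (Bc n (descSet T (c := c))) (T.parent (emb (Bc n (descSet T (c := c))) i)) from hf.2.2.2.2.2.2.1, hcard]
      exact T.ord_lt (emb (Bc n (descSet T (c := c))) i) hf.2.2.1 hf.2.2.2.1
  ord_inj := by
    intro i j h1 h2 h3 h4 hpar hord
    have hfi := d2p_facts T hk2 hkn hc h1 h2
    have hfj := d2p_facts T hk2 hkn hc h3 h4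
    have hpeq : T.parent (emb (Bc n (descSet T (c := c))) i) = T.parent (emb (Bc n (descSet T (c := c))) j) := by
      apply idx_inj hfi.2.2.2.2.2.1 hfj.2.2.2.2.2.1
      rw [← hfi.2.2.2.2.2.2.1, ← hfj.2.2.2.2.2.2.1, hpar]
    have hoeq : T.ord (emb (Bc n (descSet T (c := c))) i) = T.ord (emb (Bc n (descSet T (c := c))) j) := by
      have hi : d2o T c i = T.ord (emb (Bc n (descSet T (c := c))) i) := by rw [d2o, if_pos ⟨h1, h2⟩]
      have hj : d2o T c j = T.ord (emb (Bc n (descSet T (c := c))) j) := by rw [d2o, if_pos ⟨h3, h4⟩]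
      rw [← hi, ← hj, hord]
    have := T.ord_inj _ _ hfi.2.2.1 hfi.2.2.2.1 hfj.2.2.1 hfj.2.2.2.1 hpeq hoeq
    have := congrArg (idx (Bc n (descSet T (c := c)))) this
    have hBc := cardBT T hk2 hkn hc
    rwa [idx_emb h1 (by omega), idx_emb h3 (by omega)] at this
  parent_out := by
    intro i hi
    rw [d2p, if_neg (by omega)]
  ord_out := by
    intro i hi
    rw [d2o, if_neg (by omega)]

end DecompTrees2

section DecompLeaf

variable {n k : ℕ} (T : DPT n)
variable (hk2 : 2 ≤ k) (hkn : k ≤ n)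
variable {c : ℕ} (hc : 1 ≤ c ∧ c < n ∧ T.parent c = k)
    (hcmax : ∀ j, 1 ≤ j → j < n → T.parent j = k → T.ord j ≤ T.ord c)

include hk2 hkn hc hcmax in
theorem decT2_leafLe (hT : T.LeafLe (k-1)) :
    (decT2 T hk2 hkn hc hcmax).LeafLe (k - (descSet T (c := c)).card) := by
  intro i h1 h2 hleaf
  have hBc := cardBT T hk2 hkn hc
  have hAsub := descSet_sub T hk2 hc
  have hxm : emb (Bc n (descSet T (c := c))) i ∈ (Bc n (descSet T (c := c))) := emb_mem h1 (by omega)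
  have hm := mem_Bc.1 hxm
  have hleaf' : ∀ j, 1 ≤ j → j < n - (descSet T (c := c)).card → d2p T c j ≠ i := hleaf
  by_cases hxn : emb (Bc n (descSet T (c := c))) i = n
  · -- x = n : the root of the remainder
    have hieq : i = n - (descSet T (c := c)).card := by
      have h' : emb (Bc n (descSet T (c := c))) i = emb (Bc n (descSet T (c := c))) (Bc n (descSet T (c := c))).card := by
        rw [emb_Bc_card hk2 hkn hAsub]; exact hxn
      have := emb_inj h1 (by omega) (by omega) le_rfl h'
      omega
    by_cases hkn' : k = n
    · omega
    · exfalso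
      have hnleaf : T.IsLeaf n := by
        intro j hj1 hj2 hpj
        have hjnA : j ∉ (descSet T (c := c)) := by
          intro hmem
          by_cases hjc : j = c
          · rw [hjc, hc.2.2] at hpj; exact hkn' hpj
          · have := descSet_parent_mem T hc hmem hjc
            rw [hpj] at this
            have := descSet_ub T hc this
            have := c_lt_k T hc
            omega
        have hjB : j ∈ (Bc n (descSet T (c := c))) := mem_Bc.2 ⟨hj1, by omega, hjnA⟩
        have hlt := idx_lt_card_Bc hk2 hkn hAsub hjB (by omega)
        apply hleaf' (idx (Bc n (descSet T (c := c))) j) (idx_mem hjB).1 (by omega)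
        rw [d2p, if_pos ⟨(idx_mem hjB).1, by omega⟩, emb_idx hjB, hpj]
        rw [hieq, show n - (descSet T (c := c)).card = (Bc n (descSet T (c := c))).card from by omega]
        exact idx_of_max (n_mem_Bc hkn hk2 hAsub) (fun y hy => (mem_Bc.1 hy).2.1)
      have := hT n (by omega) le_rfl hnleaf
      omega
  · by_cases hxk : emb (Bc n (descSet T (c := c))) i = k
    · have : i = k - (descSet T (c := c)).card := by
        have := congrArg (idx (Bc n (descSet T (c := c)))) hxk
        rw [idx_emb h1 (by omega), idx_Bc_k hk2 hkn hAsub] at this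
        exact this
      omega
    · -- x is a genuine leaf of T
      have hxleaf : T.IsLeaf (emb (Bc n (descSet T (c := c))) i) := by
        intro j hj1 hj2 hpj
        have hjnA : j ∉ (descSet T (c := c)) := by
          intro hmem
          by_cases hjc : j = c
          · rw [hjc, hc.2.2] at hpj; exact hxk hpj.symm
          · have := descSet_parent_mem T hc hmem hjc
            rw [hpj] at this
            exact hm.2.2 this
        have hjB : j ∈ (Bc n (descSet T (c := c))) := mem_Bc.2 ⟨hj1, by omega, hjnA⟩
        have hlt := idx_lt_card_Bc hk2 hkn hAsub hjB (by omega)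
        apply hleaf' (idx (Bc n (descSet T (c := c))) j) (idx_mem hjB).1 (by omega)
        rw [d2p, if_pos ⟨(idx_mem hjB).1, by omega⟩, emb_idx hjB, hpj,
          idx_emb h1 (by omega)]
      have hxle := hT (emb (Bc n (descSet T (c := c))) i) hm.1 hm.2.1 hxleaf
      have hkB := k_mem_Bc hk2 hkn hAsub
      have hxlt : emb (Bc n (descSet T (c := c))) i < k := by omega
      have := (idx_lt_idx hxm hkB).2 hxlt
      rw [idx_emb h1 (by omega), idx_Bc_k hk2 hkn hAsub] at this
      omega

include hk2 hkn hc hcmax in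
theorem glueN_dec : glueN n k (descSet T (c := c)) (decT2 T hk2 hkn hc hcmax) = T.ord c := by
  have : (decT2 T hk2 hkn hc hcmax).parent = d2p T c := rfl
  rw [glueN, this]
  exact d2card_eq T hk2 hkn hc hcmax

end DecompLeaf

section GlueDec

variable {n k : ℕ} (T : DPT n)
variable (hk2 : 2 ≤ k) (hkn : k ≤ n)
variable {c : ℕ} (hc : 1 ≤ c ∧ c < n ∧ T.parent c = k)
    (hcmax : ∀ j, 1 ≤ j → j < n → T.parent j = k → T.ord j ≤ T.ord c)

include hk2 hkn hc hcmax in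
theorem glue_dec :
    glue hk2 hkn (descSet_sub T hk2 hc) (descSet_ne T hc)
      (decT1 T hk2 hkn hc) (decT2 T hk2 hkn hc hcmax) = T := by
  have hM : emb (descSet T (c := c)) (descSet T (c := c)).card = c := emb_descSet_card T hc
  have hAsub := descSet_sub T hk2 hc
  have hAne := descSet_ne T hc
  have hBc := cardBT T hk2 hkn hc
  have hT1p : (decT1 T hk2 hkn hc).parent = d1p T c := rfl
  have hT1o : (decT1 T hk2 hkn hc).ord = d1o T c := rfl
  have hT2p : (decT2 T hk2 hkn hc hcmax).parent = d2p T c := rfl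
  have hT2o : (decT2 T hk2 hkn hc hcmax).ord = d2o T c := rfl
  apply DPT.ext'
  · show glueParent n k (descSet T (c := c)) (decT1 T hk2 hkn hc) (decT2 T hk2 hkn hc hcmax) = T.parent
    funext x
    by_cases hxA : x ∈ (descSet T (c := c))
    · by_cases hxc : x = c
      · have hgm := gp_M (n := n) (k := k) hAne (decT1 T hk2 hkn hc) (decT2 T hk2 hkn hc hcmax)
        rw [hM] at hgm
        rw [hxc, hgm, hc.2.2]
      · have hxM : x ≠ emb (descSet T (c := c)) (descSet T (c := c)).card := by rw [hM]; exact hxc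
        rw [gp_A _ _ hxA hxM, hT1p]
        have hidx := idx_mem hxA
        have hlt : idx (descSet T (c := c)) x < (descSet T (c := c)).card := by
          rcases Nat.eq_or_lt_of_le hidx.2 with he | h
          · exfalso; apply hxc
            have := congrArg (emb (descSet T (c := c))) he
            rwa [emb_idx hxA, hM] at this
          · exact h
        rw [d1p, if_pos ⟨hidx.1, hlt⟩, emb_idx hxA]
        exact emb_idx (descSet_parent_mem T hc hxA hxc)
    · by_cases hxr : 1 ≤ x ∧ x < n
      · have hxB : x ∈ (Bc n (descSet T (c := c))) := mem_Bc.2 ⟨hxr.1, by omega, hxA⟩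
        have hxn : x ≠ n := by omega
        rw [gp_B _ _ hxB hxn, hT2p]
        have hidx := idx_mem hxB
        have hlt := idx_lt_card_Bc hk2 hkn hAsub hxB hxn
        rw [d2p, if_pos ⟨hidx.1, by omega⟩, emb_idx hxB]
        have hpm := T.parent_mem x hxr.1 hxr.2
        have hpnA : T.parent x ∉ (descSet T (c := c)) := by
          intro hmem
          exact hxA (descSet_closed_down T hxr.1 hxr.2 hmem)
        exact emb_idx (mem_Bc.2 ⟨by omega, by omega, hpnA⟩)
      · rw [gp_out]
        · symm
          apply T.parent_out
          omega
        · exact hxA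
        · rintro ⟨hB, hn⟩
          have := mem_Bc.1 hB
          omega
  · show glueOrd n k (descSet T (c := c)) (decT1 T hk2 hkn hc) (decT2 T hk2 hkn hc hcmax) = T.ord
    funext x
    by_cases hxA : x ∈ (descSet T (c := c))
    · by_cases hxc : x = c
      · have hgm := go_M (n := n) (k := k) hAne (decT1 T hk2 hkn hc) (decT2 T hk2 hkn hc hcmax)
        rw [hM] at hgm
        rw [hxc, hgm]
        exact glueN_dec T hk2 hkn hc hcmax
      · have hxM : x ≠ emb (descSet T (c := c)) (descSet T (c := c)).card := by rw [hM]; exact hxc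
        rw [go_A _ _ hxA hxM, hT1o]
        have hidx := idx_mem hxA
        have hlt : idx (descSet T (c := c)) x < (descSet T (c := c)).card := by
          rcases Nat.eq_or_lt_of_le hidx.2 with he | h
          · exfalso; apply hxc
            have := congrArg (emb (descSet T (c := c))) he
            rwa [emb_idx hxA, hM] at this
          · exact h
        rw [d1o, if_pos ⟨hidx.1, hlt⟩, emb_idx hxA]
    · by_cases hxr : 1 ≤ x ∧ x < n
      · have hxB : x ∈ (Bc n (descSet T (c := c))) := mem_Bc.2 ⟨hxr.1, by omega, hxA⟩
        have hxn : x ≠ n := by omega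
        rw [go_B _ _ hxB hxn, hT2o]
        have hidx := idx_mem hxB
        have hlt := idx_lt_card_Bc hk2 hkn hAsub hxB hxn
        rw [d2o, if_pos ⟨hidx.1, by omega⟩, emb_idx hxB]
      · rw [go_out]
        · symm
          apply T.ord_out
          omega
        · exact hxA
        · rintro ⟨hB, hn⟩
          have := mem_Bc.1 hB
          omega

end GlueDec


end DPTaux

namespace DPTaux
open Finset

section Inj

variable {n k : ℕ} {A : Finset ℕ}
variable (hk2 : 2 ≤ k) (hkn : k ≤ n) (hA : A ⊆ Finset.Icc 1 (k-1)) (hne : A.Nonempty)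
variable (T1 : DPT A.card) (T2 : DPT (n - A.card))

include hk2 hkn hA hne in
theorem glue_ord_strictmax {j : ℕ} (hj1 : 1 ≤ j) (hj2 : j < n)
    (hpj : glueParent n k A T1 T2 j = k) (hjM : j ≠ emb A A.card) :
    glueOrd n k A T1 T2 j < glueOrd n k A T1 T2 (emb A A.card) := by
  rcases branch_of_parent hk2 hkn hA hne T1 T2 hj1 hj2 hpj with
    ⟨_, _, hpA, _⟩ | ⟨hjM', _⟩ | ⟨hjB, hjn, _, heq⟩
  · exact absurd hpA (k_notMem_A hk2 hA)
  · exact absurd hjM' hjM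
  · rw [go_B T1 T2 hjB hjn, go_M hne]
    have hpar : T2.parent (idx (Bc n A) j) = k - A.card := by
      rw [← heq, idx_Bc_k hk2 hkn hA]
    apply T2ord_lt_glueN hk2 hkn hA hne T2 (idx_mem hjB).1 _ hpar
    have := idx_lt_card_Bc hk2 hkn hA hjB hjn
    have := card_Bc hk2 hkn hA
    omega

include hk2 hkn hA hne in
theorem glue_reach {x : ℕ} :
    x ∈ A ↔ (x ∈ Finset.Icc 1 n ∧
      ∃ m, (glueParent n k A T1 T2)^[m] x = emb A A.card) := by
  constructor
  · intro hx
    have hIcc : x ∈ Finset.Icc 1 n := by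
      have := memA_le hA hx
      rw [mem_Icc]; omega
    refine ⟨hIcc, ?_⟩
    have := reach_top (glue hk2 hkn hA hne T1 T2) A (emb A A.card) (M_mem hne)
      (fun y hy => M_max hne hy) (fun y hy hyM => ?_) x hx
    · exact this
    · have hs := gpA_spec (k := k) hne T1 T2 hy hyM
      exact ⟨hs.1, hs.2.1⟩
  · rintro ⟨hIcc, m, hm⟩
    by_contra hxA
    rw [mem_Icc] at hIcc
    have hxB : x ∈ Bc n A := mem_Bc.2 ⟨hIcc.1, hIcc.2, hxA⟩
    -- chains starting in Bc stay in Bc ∪ {0}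
    have key : ∀ m' y, y ∈ Bc n A →
        ((glueParent n k A T1 T2)^[m'] y ∈ Bc n A ∨ (glueParent n k A T1 T2)^[m'] y = 0) := by
      intro m'
      induction m' with
      | zero => intro y hy; exact Or.inl hy
      | succ m' ih =>
        intro y hy
        rw [Function.iterate_succ_apply]
        by_cases hyn : y = n
        · right
          have h0 : glueParent n k A T1 T2 y = 0 := by
            apply gp_out
            · intro hmem; have := memA_le hA hmem; omega
            · rintro ⟨_, hn⟩; exact hn hyn
          rw [h0]
          exact iter_zero (glue hk2 hkn hA hne T1 T2) m'
        · exact ih _ (gpB_spec hk2 hkn hA T1 T2 hy hyn).1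
    rcases key m x hxB with hmem | h0
    · rw [hm] at hmem
      exact (mem_Bc.1 hmem).2.2 (M_mem hne)
    · rw [hm] at h0
      have := memA_le hA (M_mem hne)
      omega

end Inj

section Inj2

variable {n k : ℕ} {A A' : Finset ℕ}
variable (hk2 : 2 ≤ k) (hkn : k ≤ n)
    (hA : A ⊆ Finset.Icc 1 (k-1)) (hne : A.Nonempty)
    (hA' : A' ⊆ Finset.Icc 1 (k-1)) (hne' : A'.Nonempty)
variable (T1 : DPT A.card) (T2 : DPT (n - A.card))
variable (T1' : DPT A'.card) (T2' : DPT (n - A'.card))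

include hk2 hkn hA hne hA' hne' in
theorem glue_inj_A
    (h : glue hk2 hkn hA hne T1 T2 = glue hk2 hkn hA' hne' T1' T2') : A = A' := by
  have hp : glueParent n k A T1 T2 = glueParent n k A' T1' T2' := congrArg DPT.parent h
  have ho : glueOrd n k A T1 T2 = glueOrd n k A' T1' T2' := congrArg DPT.ord h
  -- first, the two "last children" coincide
  have hMM : emb A A.card = emb A' A'.card := by
    by_contra hne''
    have hM1 := M_mem hne
    have hM2 := M_mem hne'
    have hb1 := memA_le hA hM1
    have hb2 := memA_le hA' hM2
    have h1 : glueParent n k A' T1' T2' (emb A A.card) = k := by rw [← hp]; exact gp_M hne T1 T2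
    have h2 : glueParent n k A T1 T2 (emb A' A'.card) = k := by rw [hp]; exact gp_M hne' T1' T2'
    have l1 := glue_ord_strictmax hk2 hkn hA hne T1 T2 (j := emb A' A'.card)
      (by omega) (by omega) h2 (fun hh => hne'' hh.symm)
    have l2 := glue_ord_strictmax hk2 hkn hA' hne' T1' T2' (j := emb A A.card)
      (by omega) (by omega) h1 hne''
    rw [← ho] at l2
    omega
  ext x
  rw [glue_reach hk2 hkn hA hne T1 T2, glue_reach hk2 hkn hA' hne' T1' T2', hp, hMM]

include hk2 hkn hA hne hA' hne' in
theorem glue_inj_A'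
    (h : glue hk2 hkn hA hne T1 T2 = glue hk2 hkn hA' hne' T1' T2') : A = A' :=
  glue_inj_A hk2 hkn hA hne hA' hne' T1 T2 T1' T2' h

end Inj2

section Inj3

variable {n k : ℕ} {A : Finset ℕ}
variable (hk2 : 2 ≤ k) (hkn : k ≤ n)
    (hA : A ⊆ Finset.Icc 1 (k-1)) (hne : A.Nonempty)
    (hA' : A ⊆ Finset.Icc 1 (k-1)) (hne' : A.Nonempty)
variable (T1 T1' : DPT A.card) (T2 T2' : DPT (n - A.card))

include hk2 hkn hA hne hA' hne' in
theorem glue_inj_T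
    (h : glue hk2 hkn hA hne T1 T2 = glue hk2 hkn hA' hne' T1' T2') :
    T1 = T1' ∧ T2 = T2' := by
  have hp : glueParent n k A T1 T2 = glueParent n k A T1' T2' := congrArg DPT.parent h
  have ho : glueOrd n k A T1 T2 = glueOrd n k A T1' T2' := congrArg DPT.ord h
  have hBc := card_Bc hk2 hkn hA
  constructor
  · apply DPT.ext'
    · funext i
      by_cases hir : 1 ≤ i ∧ i < A.card
      · have hxm : emb A i ∈ A := emb_mem hir.1 (le_of_lt hir.2)
        have hxM : emb A i ≠ emb A A.card := by
          intro hh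
          have hc1 : 1 ≤ A.card := Finset.card_pos.2 hne
          have := emb_inj hir.1 (le_of_lt hir.2) hc1 le_rfl hh
          omega
        have e1 := gp_A (n := n) (k := k) T1 T2 hxm hxM
        have e2 := gp_A (n := n) (k := k) T1' T2' hxm hxM
        rw [idx_emb hir.1 (le_of_lt hir.2)] at e1 e2
        rw [hp, e2] at e1
        have b1 := T1.parent_mem i hir.1 hir.2
        have b2 := T1'.parent_mem i hir.1 hir.2
        exact emb_inj (by omega) b1.2 (by omega) b2.2 e1.symm
      · rw [T1.parent_out i (by omega), T1'.parent_out i (by omega)]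
    · funext i
      by_cases hir : 1 ≤ i ∧ i < A.card
      · have hxm : emb A i ∈ A := emb_mem hir.1 (le_of_lt hir.2)
        have hxM : emb A i ≠ emb A A.card := by
          intro hh
          have hc1 : 1 ≤ A.card := Finset.card_pos.2 hne
          have := emb_inj hir.1 (le_of_lt hir.2) hc1 le_rfl hh
          omega
        have e1 := go_A (n := n) (k := k) T1 T2 hxm hxM
        have e2 := go_A (n := n) (k := k) T1' T2' hxm hxM
        rw [idx_emb hir.1 (le_of_lt hir.2)] at e1 e2
        rw [← e1, ← e2, ho]
      · rw [T1.ord_out i (by omega), T1'.ord_out i (by omega)]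
  · apply DPT.ext'
    · funext i
      by_cases hir : 1 ≤ i ∧ i < n - A.card
      · have hxm : emb (Bc n A) i ∈ Bc n A := emb_mem hir.1 (by omega)
        have hxn : emb (Bc n A) i ≠ n := by
          intro hh
          have hh' : emb (Bc n A) i = emb (Bc n A) ((Bc n A).card) := by
            rw [emb_Bc_card hk2 hkn hA]; exact hh
          have := emb_inj hir.1 (by omega) (by omega) le_rfl hh'
          omega
        have e1 := gp_B (n := n) (k := k) T1 T2 hxm hxn
        have e2 := gp_B (n := n) (k := k) T1' T2' hxm hxn
        rw [idx_emb hir.1 (by omega)] at e1 e2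
        rw [hp, e2] at e1
        have b1 := T2.parent_mem i hir.1 hir.2
        have b2 := T2'.parent_mem i hir.1 hir.2
        exact emb_inj (by omega) (by omega) (by omega) (by omega) e1.symm
      · rw [T2.parent_out i (by omega), T2'.parent_out i (by omega)]
    · funext i
      by_cases hir : 1 ≤ i ∧ i < n - A.card
      · have hxm : emb (Bc n A) i ∈ Bc n A := emb_mem hir.1 (by omega)
        have hxn : emb (Bc n A) i ≠ n := by
          intro hh
          have hh' : emb (Bc n A) i = emb (Bc n A) ((Bc n A).card) := by
            rw [emb_Bc_card hk2 hkn hA]; exact hh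
          have := emb_inj hir.1 (by omega) (by omega) le_rfl hh'
          omega
        have e1 := go_B (n := n) (k := k) T1 T2 hxm hxn
        have e2 := go_B (n := n) (k := k) T1' T2' hxm hxn
        rw [idx_emb hir.1 (by omega)] at e1 e2
        rw [← e1, ← e2, ho]
      · rw [T2.ord_out i (by omega), T2'.ord_out i (by omega)]

end Inj3
end DPTaux

namespace DPTaux
open Finset

def Sfin (k : ℕ) : Finset (Finset ℕ) :=
  (Finset.Icc 1 (k-1)).powerset.filter (fun A => A.Nonempty)

theorem mem_Sfin {k : ℕ} {A : Finset ℕ} :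
    A ∈ Sfin k ↔ A ⊆ Finset.Icc 1 (k-1) ∧ A.Nonempty := by
  simp [Sfin, Finset.mem_filter, Finset.mem_powerset]

section Pack

variable (n k : ℕ) (hk2 : 2 ≤ k) (hkn : k ≤ n)

noncomputable def composeX :
    ((A : {A : Finset ℕ // A ∈ Sfin k}) ×
      ({T1 : DPT (A.1.card) // T1.LeafLe (A.1.card)} ×
       {T2 : DPT (n - A.1.card) // T2.LeafLe (k - A.1.card)})) →
    {T : DPT n // T.LeafLe (k-1)} := fun x =>
  ⟨glue hk2 hkn (mem_Sfin.1 x.1.2).1 (mem_Sfin.1 x.1.2).2 x.2.1.1 x.2.2.1,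
   glue_leafLe hk2 hkn (mem_Sfin.1 x.1.2).1 (mem_Sfin.1 x.1.2).2 x.2.1.1 x.2.2.1 x.2.2.2⟩

theorem composeX_bijective : Function.Bijective (composeX n k hk2 hkn) := by
  constructor
  · rintro ⟨⟨A, hS⟩, ⟨⟨T1, l1⟩, ⟨T2, l2⟩⟩⟩ ⟨⟨A', hS'⟩, ⟨⟨T1', l1'⟩, ⟨T2', l2'⟩⟩⟩ hxy
    have heq := congrArg Subtype.val hxy
    simp only [composeX] at heq
    have hAA : A = A' :=
      glue_inj_A' hk2 hkn (mem_Sfin.1 hS).1 (mem_Sfin.1 hS).2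
        (mem_Sfin.1 hS').1 (mem_Sfin.1 hS').2 T1 T2 T1' T2' heq
    subst hAA
    obtain ⟨h1, h2⟩ :=
      glue_inj_T hk2 hkn (mem_Sfin.1 hS).1 (mem_Sfin.1 hS).2
        (mem_Sfin.1 hS').1 (mem_Sfin.1 hS').2 T1 T1' T2 T2' heq
    subst h1
    subst h2
    rfl
  · rintro ⟨T, hT⟩
    obtain ⟨c, hc, hcmax⟩ := exists_maxchild T hk2 hkn hT
    refine ⟨⟨⟨descSet T (c := c), mem_Sfin.2 ⟨descSet_sub T hk2 hc, descSet_ne T hc⟩⟩,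
      ⟨⟨decT1 T hk2 hkn hc, decT1_leafLe T hk2 hkn hc⟩,
       ⟨decT2 T hk2 hkn hc hcmax, decT2_leafLe T hk2 hkn hc hcmax hT⟩⟩⟩, ?_⟩
    apply Subtype.ext
    exact glue_dec T hk2 hkn hc hcmax

theorem card_X :
    Nat.card ((A : {A : Finset ℕ // A ∈ Sfin k}) ×
      ({T1 : DPT (A.1.card) // T1.LeafLe (A.1.card)} ×
       {T2 : DPT (n - A.1.card) // T2.LeafLe (k - A.1.card)}))
    = ∑ A ∈ Sfin k, dpt A.card A.card * dpt (n - A.card) (k - A.card) := by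
  classical
  letI F1 : ∀ A : {A : Finset ℕ // A ∈ Sfin k},
      Fintype {T1 : DPT (A.1.card) // T1.LeafLe (A.1.card)} :=
    fun A => Fintype.ofFinite _
  letI F2 : ∀ A : {A : Finset ℕ // A ∈ Sfin k},
      Fintype {T2 : DPT (n - A.1.card) // T2.LeafLe (k - A.1.card)} :=
    fun A => Fintype.ofFinite _
  rw [Nat.card_eq_fintype_card, Fintype.card_sigma]
  rw [← Finset.sum_coe_sort (Sfin k)
    (fun A => dpt A.card A.card * dpt (n - A.card) (k - A.card))]
  apply Finset.sum_congr rfl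
  intro A _
  rw [Fintype.card_prod]
  rw [dpt, dpt, Nat.card_eq_fintype_card, Nat.card_eq_fintype_card]

end Pack

theorem sum_Sfin (k : ℕ) (g : ℕ → ℕ) :
    ∑ A ∈ Sfin k, g A.card = ∑ a ∈ Finset.Icc 1 (k-1), (k-1).choose a * g a := by
  classical
  have hcard : (Finset.Icc 1 (k-1)).card = k - 1 := by simp [Nat.card_Icc]
  have hP : ∑ A ∈ (Finset.Icc 1 (k-1)).powerset, g A.card
      = ∑ j ∈ Finset.range ((k-1)+1), (k-1).choose j * g j := by
    rw [Finset.sum_powerset, hcard]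
    apply Finset.sum_congr rfl
    intro j _
    rw [Finset.sum_powersetCard j (Finset.Icc 1 (k-1)) g, hcard, smul_eq_mul]
  have hins : Finset.range ((k-1)+1) = insert 0 (Finset.Icc 1 (k-1)) := by
    ext a
    simp only [Finset.mem_range, Finset.mem_insert, Finset.mem_Icc]
    omega
  rw [hins, Finset.sum_insert (by simp)] at hP
  have hsplit := Finset.sum_filter_add_sum_filter_not
    ((Finset.Icc 1 (k-1)).powerset) (fun A => A.Nonempty) (fun A => g A.card)
  have hempty : ((Finset.Icc 1 (k-1)).powerset).filter (fun A => ¬A.Nonempty) = {∅} := by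
    ext A
    simp only [Finset.mem_filter, Finset.mem_powerset, Finset.mem_singleton,
      Finset.not_nonempty_iff_eq_empty]
    constructor
    · rintro ⟨_, h⟩; exact h
    · rintro rfl; simp
  rw [hempty, Finset.sum_singleton] at hsplit
  have : ∑ A ∈ Sfin k, g A.card + g (∅ : Finset ℕ).card
      = (k-1).choose 0 * g 0 + ∑ a ∈ Finset.Icc 1 (k-1), (k-1).choose a * g a := by
    rw [Sfin]
    rw [hsplit, hP]
  simp only [Finset.card_empty, Nat.choose_zero_right, one_mul] at this
  omega


end DPTaux


theorem stmt11 (n k : ℕ) (hn : 1 ≤ n) (hk : 2 ≤ k) (hkn : k ≤ n) :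
    dpt n (k - 1) =
      ∑ a ∈ Finset.Icc 1 (k - 1),
        Nat.choose (k - 1) a * dpt a a * dpt (n - a) (k - a) := by
  have h1 : dpt n (k-1) = Nat.card {T : DPT n // T.LeafLe (k-1)} := rfl
  have h2 := Nat.card_eq_of_bijective _ (DPTaux.composeX_bijective n k hk hkn)
  have h3 := DPTaux.card_X n k
  have h4 := DPTaux.sum_Sfin k (fun a => dpt a a * dpt (n - a) (k - a))
  rw [h1, ← h2, h3, h4]
  apply Finset.sum_congr rfl
  intro a _
  rw [mul_assoc]
end

section
/- Let m(n,k) denote the number of perfect matchings of [1,2n] with exactly k long pairs. Then for all n ≥ 1 and k ∈ ℤ, m(n,k) = m(n−1,k) + (n+k−2)·m(n−1,k−1) + (n−k+1)·m(n−1,k−2), with m(n,k)=0 for k<0 or k>n and m(n,0)=1 for all n ≥ 0. -/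
/-- `M` is a perfect matching on `[1, 2n]`. -/
def IsMatching (n : ℕ) (M : Finset (Finset ℕ)) : Prop :=
  (∀ p ∈ M, p.card = 2) ∧ (M : Set (Finset ℕ)).PairwiseDisjoint id ∧
    M.biUnion id = Finset.Icc 1 (2 * n)

/-- A pair is long if it is not of the form `{i, i+1}`. -/
def IsLong (p : Finset ℕ) : Prop := ∀ i : ℕ, p ≠ {i, i + 1}

/-- `matchCount n k`: the number of perfect matchings of `[1,2n]` with exactly
`k` long pairs (for `k : ℤ`; it vanishes for `k < 0`). -/
noncomputable def matchCount (n : ℕ) (k : ℤ) : ℕ :=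
  Nat.card {M : Finset (Finset ℕ) //
    IsMatching n M ∧ ({p : Finset ℕ | p ∈ M ∧ IsLong p}.ncard : ℤ) = k}

/-!
Deleting the pair that contains `2n + 2` and closing the gap left by its partner `j + 1` is a
bijection from the matchings of `[1, 2n + 2]` onto the pairs `(j, M')` with `j ≤ 2n` and `M'` a
matching of `[1, 2n]`. Reopening the gap changes the type of at most two pairs: the new pair
`{j + 1, 2n + 2}` is long unless `j = 2n`, and a short pair `{j, j + 1}` of `M'`, if present,
becomes long. A matching `M'` with `k` long pairs has `n - k` short pairs, so among its `2n + 1`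
extensions one has `k` long pairs, `n - k` have `k + 2` and the remaining `n + k` have `k + 1`.
-/

open Finset
open scoped Classical

theorem Finset.pair_eq_pair_iff {α : Type*} [DecidableEq α] {a b c d : α} :
    ({a, b} : Finset α) = {c, d} ↔ a = c ∧ b = d ∨ a = d ∧ b = c := by
  rw [← coe_inj, coe_pair, coe_pair, Set.pair_eq_pair_iff]

-- `IsMatching n M` unfolds to `IsMatchingOn (Icc 1 (2 * n)) M`.
def IsMatchingOn {α : Type*} [DecidableEq α] (s : Finset α) (M : Finset (Finset α)) : Prop :=
  (∀ p ∈ M, #p = 2) ∧ (M : Set (Finset α)).PairwiseDisjoint id ∧ M.biUnion id = s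

namespace IsMatchingOn

variable {α β : Type*} [DecidableEq α] [DecidableEq β] {s : Finset α} {M : Finset (Finset α)}
  {p q : Finset α}

theorem subset_of_mem (hM : IsMatchingOn s M) (hp : p ∈ M) : p ⊆ s :=
  hM.2.2 ▸ subset_biUnion_of_mem id hp

theorem eq_of_mem_of_mem (hM : IsMatchingOn s M) (hp : p ∈ M) (hq : q ∈ M) {x : α}
    (hxp : x ∈ p) (hxq : x ∈ q) : p = q :=
  hM.2.1.elim_finset hp hq x hxp hxq

theorem two_mul_card (hM : IsMatchingOn s M) : 2 * #M = #s := by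
  rw [← hM.2.2, card_biUnion hM.2.1]
  simp only [id_eq]
  rw [sum_congr rfl hM.1, sum_const, smul_eq_mul, mul_comm]

theorem image (hM : IsMatchingOn s M) {f : α → β} (hf : Set.InjOn f s) :
    IsMatchingOn (s.image f) (M.image (Finset.image f)) := by
  have hfp : ∀ p ∈ M, Set.InjOn f p := fun p hp => hf.mono (coe_subset.2 (hM.subset_of_mem hp))
  refine ⟨?_, ?_, ?_⟩
  · rintro _ hq
    obtain ⟨p, hp, rfl⟩ := mem_image.1 hq
    rw [card_image_of_injOn (hfp p hp), hM.1 p hp]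
  · rintro _ hp' _ hq' hne
    obtain ⟨p, hp, rfl⟩ := mem_image.1 hp'
    obtain ⟨q, hq, rfl⟩ := mem_image.1 hq'
    have hpq : p ≠ q := by rintro rfl; exact hne rfl
    have hinj : Set.InjOn f (↑p ∪ ↑q) := by
      rw [← coe_union]
      exact hf.mono (coe_subset.2 (union_subset (hM.subset_of_mem hp) (hM.subset_of_mem hq)))
    have hd : Disjoint p q := hM.2.1 hp hq hpq
    change Disjoint (p.image f) (q.image f)
    rw [disjoint_iff_inter_eq_empty, ← image_inter_of_injOn p q hinj,
      disjoint_iff_inter_eq_empty.1 hd, image_empty]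
  · rw [image_biUnion, ← hM.2.2, biUnion_image]
    rfl

theorem insert (hM : IsMatchingOn s M) (hp : #p = 2) (hps : Disjoint p s) :
    IsMatchingOn (p ∪ s) (insert p M) := by
  refine ⟨?_, ?_, ?_⟩
  · simpa [hp] using hM.1
  · rw [coe_insert]
    exact hM.2.1.insert fun q hq _ => hps.mono_right (hM.subset_of_mem hq)
  · rw [biUnion_insert, hM.2.2]
    rfl

theorem erase (hM : IsMatchingOn s M) (hp : p ∈ M) : IsMatchingOn (s \ p) (M.erase p) := by
  refine ⟨fun q hq => hM.1 q (mem_of_mem_erase hq), hM.2.1.subset (coe_subset.2 (erase_subset _ _)),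
    ?_⟩
  ext x
  simp only [mem_biUnion, mem_erase, id, mem_sdiff, ← hM.2.2]
  constructor
  · rintro ⟨q, ⟨hqp, hq⟩, hx⟩
    exact ⟨⟨q, hq, hx⟩, fun hxp => hqp (hM.eq_of_mem_of_mem hq hp hx hxp)⟩
  · rintro ⟨⟨q, hq, hx⟩, hxp⟩
    exact ⟨q, ⟨by rintro rfl; exact hxp hx, hq⟩, hx⟩

end IsMatchingOn

def liftAbove (j x : ℕ) : ℕ := if x ≤ j then x else x + 1

def lowerAbove (j x : ℕ) : ℕ := if x ≤ j then x else x - 1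

theorem lowerAbove_liftAbove (j : ℕ) : Function.LeftInverse (lowerAbove j) (liftAbove j) := by
  intro x
  unfold liftAbove lowerAbove
  split_ifs <;> omega

theorem liftAbove_lowerAbove {j x : ℕ} (hx : x ≠ j + 1) : liftAbove j (lowerAbove j x) = x := by
  unfold liftAbove lowerAbove
  split_ifs <;> omega

theorem liftAbove_ne (j x : ℕ) : liftAbove j x ≠ j + 1 := by
  unfold liftAbove
  split_ifs <;> omega

theorem image_liftAbove_Icc {j m : ℕ} (hj : j ≤ m) :
    (Icc 1 m).image (liftAbove j) = (Icc 1 (m + 1)).erase (j + 1) := by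
  ext y
  simp only [mem_image, mem_erase, mem_Icc]
  constructor
  · rintro ⟨x, hx, rfl⟩
    exact ⟨liftAbove_ne j x, by unfold liftAbove; split_ifs <;> omega⟩
  · rintro ⟨hy, hy1, hym⟩
    exact ⟨lowerAbove j y, by unfold lowerAbove; split_ifs <;> omega, liftAbove_lowerAbove hy⟩

theorem image_image_lowerAbove_liftAbove (j : ℕ) (s : Finset ℕ) :
    (s.image (liftAbove j)).image (lowerAbove j) = s := by
  rw [image_image, (lowerAbove_liftAbove j).comp_eq_id, image_id]

theorem isLong_pair_iff (a b : ℕ) : IsLong {a, b} ↔ a + 1 ≠ b ∧ b + 1 ≠ a := by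
  simp only [IsLong, ne_eq, pair_eq_pair_iff]
  constructor
  · intro h
    exact ⟨fun hab => h a (Or.inl ⟨rfl, hab.symm⟩), fun hba => h b (Or.inr ⟨hba.symm, rfl⟩)⟩
  · intro h i
    omega

theorem not_isLong_pair_succ (i : ℕ) : ¬IsLong {i, i + 1} := fun h => h i rfl

theorem isLong_image_liftAbove_pair (j a b : ℕ) :
    IsLong (({a, b} : Finset ℕ).image (liftAbove j)) ↔
      IsLong {a, b} ∨ ({a, b} : Finset ℕ) = {j, j + 1} := by
  rw [image_insert, image_singleton, isLong_pair_iff, isLong_pair_iff, pair_eq_pair_iff]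
  unfold liftAbove
  split_ifs <;> omega

noncomputable def matchings (n : ℕ) : Finset (Finset (Finset ℕ)) :=
  {M ∈ (Icc 1 (2 * n)).powerset.powerset | IsMatchingOn (Icc 1 (2 * n)) M}

theorem mem_matchings {n : ℕ} {M : Finset (Finset ℕ)} :
    M ∈ matchings n ↔ IsMatchingOn (Icc 1 (2 * n)) M := by
  rw [matchings, mem_filter, mem_powerset, and_iff_right_iff_imp]
  exact fun hM p hp => mem_powerset.2 (hM.subset_of_mem hp)

noncomputable def longCount (M : Finset (Finset ℕ)) : ℕ := #{p ∈ M | IsLong p}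

theorem matchCount_eq_card (n : ℕ) (k : ℤ) :
    matchCount n k = #{M ∈ matchings n | (longCount M : ℤ) = k} := by
  rw [matchCount, ← Nat.card_eq_finsetCard]
  refine Nat.card_congr (Equiv.subtypeEquivRight fun M => ?_)
  rw [mem_filter, mem_matchings, longCount, ← Set.ncard_coe_finset, coe_filter]
  rfl

def insertPair (n j : ℕ) (M : Finset (Finset ℕ)) : Finset (Finset ℕ) :=
  insert {j + 1, 2 * n + 2} (M.image (image (liftAbove j)))

def erasePair (n j : ℕ) (M : Finset (Finset ℕ)) : Finset (Finset ℕ) :=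
  (M.erase {j + 1, 2 * n + 2}).image (image (lowerAbove j))

section insertPair

variable {n j : ℕ} {M : Finset (Finset ℕ)}

theorem pair_not_mem_image_liftAbove (n j : ℕ) (M : Finset (Finset ℕ)) :
    {j + 1, 2 * n + 2} ∉ M.image (image (liftAbove j)) := by
  intro h
  obtain ⟨p, -, hp⟩ := mem_image.1 h
  obtain ⟨x, -, hx⟩ := mem_image.1 (hp ▸ mem_insert_self (j + 1) {2 * n + 2})
  exact liftAbove_ne j x hx

theorem erasePair_insertPair (n j : ℕ) (M : Finset (Finset ℕ)) :
    erasePair n j (insertPair n j M) = M := by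
  rw [erasePair, insertPair, erase_insert (pair_not_mem_image_liftAbove n j M), image_image]
  conv_rhs => rw [← image_id (s := M)]
  exact image_congr fun p _ => image_image_lowerAbove_liftAbove j p

theorem IsMatchingOn.insertPair (hM : IsMatchingOn (Icc 1 (2 * n)) M) (hj : j ≤ 2 * n) :
    IsMatchingOn (Icc 1 (2 * (n + 1))) (insertPair n j M) := by
  have h := hM.image (lowerAbove_liftAbove j).injective.injOn
  rw [image_liftAbove_Icc hj] at h
  convert h.insert (p := {j + 1, 2 * n + 2}) (card_pair (by omega)) ?_ using 1
  · ext x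
    simp only [mem_Icc, mem_union, mem_insert, mem_singleton, mem_erase]
    omega
  · rfl
  · rw [disjoint_left]
    intro x hx
    simp only [mem_insert, mem_singleton, mem_erase, mem_Icc] at hx ⊢
    omega

theorem IsMatchingOn.erasePair (hM : IsMatchingOn (Icc 1 (2 * (n + 1))) M)
    (hp : {j + 1, 2 * n + 2} ∈ M) (hj : j ≤ 2 * n) :
    IsMatchingOn (Icc 1 (2 * n)) (erasePair n j M) := by
  have hs : Icc 1 (2 * (n + 1)) \ {j + 1, 2 * n + 2} = (Icc 1 (2 * n)).image (liftAbove j) := by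
    rw [image_liftAbove_Icc hj]
    ext x
    simp only [mem_Icc, mem_sdiff, mem_insert, mem_singleton, mem_erase]
    omega
  have hinj : Set.InjOn (lowerAbove j) ↑(Icc 1 (2 * (n + 1)) \ {j + 1, 2 * n + 2}) := by
    refine Set.LeftInvOn.injOn (f₁' := liftAbove j) fun x hx => liftAbove_lowerAbove ?_
    rintro rfl
    simp at hx
  have h := (hM.erase hp).image hinj
  rwa [hs, image_image_lowerAbove_liftAbove] at h

theorem insertPair_erasePair (hM : IsMatchingOn (Icc 1 (2 * (n + 1))) M)
    (hp : {j + 1, 2 * n + 2} ∈ M) : insertPair n j (erasePair n j M) = M := by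
  rw [insertPair, erasePair, image_image]
  conv_rhs => rw [← insert_erase hp, ← image_id (s := M.erase _)]
  congr 1
  refine image_congr fun q hq => ?_
  rw [Function.comp_apply, image_image, id]
  conv_rhs => rw [← image_id (s := q)]
  refine image_congr fun x hx => liftAbove_lowerAbove ?_
  rintro rfl
  obtain ⟨hqp, hqM⟩ := mem_erase.1 hq
  exact hqp (hM.eq_of_mem_of_mem hqM hp hx (mem_insert_self _ _))

theorem IsMatchingOn.exists_pair_mem (hM : IsMatchingOn (Icc 1 (2 * (n + 1))) M) :
    ∃ j ≤ 2 * n, {j + 1, 2 * n + 2} ∈ M := by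
  obtain ⟨p, hp, hxp⟩ := mem_biUnion.1 (hM.2.2 ▸ mem_Icc.2 ⟨by omega, by omega⟩ :
    2 * n + 2 ∈ M.biUnion id)
  obtain ⟨a, b, hab, rfl⟩ := card_eq_two.1 (hM.1 p hp)
  have hsub := hM.subset_of_mem hp
  simp only [insert_subset_iff, singleton_subset_iff, mem_Icc] at hsub
  simp only [id, mem_insert, mem_singleton] at hxp
  rcases hxp with rfl | rfl
  · exact ⟨b - 1, by omega, by rwa [Nat.sub_add_cancel hsub.2.1, pair_comm]⟩
  · exact ⟨a - 1, by omega, by rwa [Nat.sub_add_cancel hsub.1.1]⟩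

theorem IsMatchingOn.eq_of_pair_mem (hM : IsMatchingOn (Icc 1 (2 * (n + 1))) M) {j j' : ℕ}
    (hj : j ≤ 2 * n) (hp : {j + 1, 2 * n + 2} ∈ M) (hp' : {j' + 1, 2 * n + 2} ∈ M) : j = j' := by
  have := hM.eq_of_mem_of_mem hp hp' (mem_insert_of_mem (mem_singleton_self _))
    (mem_insert_of_mem (mem_singleton_self _))
  rw [pair_eq_pair_iff] at this
  omega

end insertPair

theorem sum_matchings_succ {γ : Type*} [AddCommMonoid γ] (n : ℕ) (f : Finset (Finset ℕ) → γ) :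
    ∑ M ∈ matchings (n + 1), f M =
      ∑ M ∈ matchings n, ∑ j ∈ range (2 * n + 1), f (insertPair n j M) := by
  rw [← sum_product (matchings n) (range (2 * n + 1)) fun x => f (insertPair n x.2 x.1)]
  symm
  refine sum_bij (fun x _ => insertPair n x.2 x.1) ?_ ?_ ?_ fun _ _ => rfl
  · rintro ⟨M, j⟩ hx
    rw [mem_product, mem_matchings, mem_range] at hx
    exact mem_matchings.2 (hx.1.insertPair (by omega))
  · rintro ⟨M, j⟩ hx ⟨M', j'⟩ hx' h
    rw [mem_product, mem_matchings, mem_range] at hx hx'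
    have hp : {j' + 1, 2 * n + 2} ∈ insertPair n j M := h ▸ mem_insert_self _ _
    obtain rfl := ((hx.1.insertPair (by omega)).eq_of_pair_mem (by omega) (mem_insert_self _ _) hp)
    have := congrArg (erasePair n j) h
    rw [erasePair_insertPair, erasePair_insertPair] at this
    exact Prod.ext this rfl
  · intro M hM
    rw [mem_matchings] at hM
    obtain ⟨j, hj, hp⟩ := hM.exists_pair_mem
    exact ⟨(erasePair n j M, j), mem_product.2 ⟨mem_matchings.2 (hM.erasePair hp hj),
      mem_range.2 (by omega)⟩, insertPair_erasePair hM hp⟩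

theorem longCount_insertPair {n j : ℕ} {M : Finset (Finset ℕ)} (hM : ∀ p ∈ M, #p = 2) :
    longCount (insertPair n j M) = longCount M + (if IsLong {j + 1, 2 * n + 2} then 1 else 0)
      + if {j, j + 1} ∈ M then 1 else 0 := by
  have hlift (p) (hp : p ∈ M) : (if IsLong (p.image (liftAbove j)) then 1 else 0) =
      (if IsLong p then 1 else 0) + if p = {j, j + 1} then 1 else 0 := by
    obtain ⟨a, b, -, rfl⟩ := card_eq_two.1 (hM p hp)
    rw [isLong_image_liftAbove_pair]
    by_cases h : ({a, b} : Finset ℕ) = {j, j + 1}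
    · simp [h, not_isLong_pair_succ]
    · simp [h]
  simp only [longCount, insertPair, card_filter]
  rw [sum_insert (pair_not_mem_image_liftAbove n j M),
    sum_image fun _ _ _ _ h => image_injective (lowerAbove_liftAbove j).injective h,
    sum_congr rfl hlift, sum_add_distrib, sum_ite_eq']
  ring

theorem card_pairs_succ_mem_add_longCount {n : ℕ} {M : Finset (Finset ℕ)}
    (hM : IsMatchingOn (Icc 1 (2 * n)) M) :
    #{j ∈ range (2 * n) | {j, j + 1} ∈ M} + longCount M = n := by
  have hshort : #{j ∈ range (2 * n) | {j, j + 1} ∈ M} = #{p ∈ M | ¬IsLong p} := by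
    refine card_nbij (fun j => {j, j + 1}) (fun j hj => ?_) (fun j _ j' _ h => ?_) fun p hp => ?_
    · exact mem_filter.2 ⟨(mem_filter.1 hj).2, not_isLong_pair_succ j⟩
    · have := pair_eq_pair_iff.1 h
      omega
    · obtain ⟨hpM, hp⟩ := mem_filter.1 hp
      obtain ⟨i, rfl⟩ : ∃ i, p = {i, i + 1} := by simpa [IsLong] using hp
      have := hM.subset_of_mem hpM (mem_insert_of_mem (mem_singleton_self _))
      exact ⟨i, mem_filter.2 ⟨mem_range.2 (by simp at this; omega), hpM⟩, rfl⟩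
  have hcard := hM.two_mul_card
  rw [Nat.card_Icc, ← card_filter_add_card_filter_not fun p => IsLong p] at hcard
  rw [hshort, longCount]
  omega

theorem card_filter_longCount_insertPair {n : ℕ} {M : Finset (Finset ℕ)}
    (hM : IsMatchingOn (Icc 1 (2 * n)) M) (k : ℤ) :
    (#{j ∈ range (2 * n + 1) | (longCount (insertPair n j M) : ℤ) = k} : ℤ) =
      (if (longCount M : ℤ) = k then 1 else 0)
        + (n + k - 1) * (if (longCount M : ℤ) = k - 1 then 1 else 0)
        + (n - k + 2) * (if (longCount M : ℤ) = k - 2 then 1 else 0) := by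
  have hshort := card_pairs_succ_mem_add_longCount hM
  have hsplit := card_filter_add_card_filter_not (s := range (2 * n)) fun j => {j, j + 1} ∈ M
  rw [card_range] at hsplit
  have hcount (j) (hj : j < 2 * n) : longCount (insertPair n j M) =
      longCount M + 1 + if {j, j + 1} ∈ M then 1 else 0 := by
    rw [longCount_insertPair hM.1, if_pos ((isLong_pair_iff _ _).2 (by omega))]
  have htop : longCount (insertPair n (2 * n) M) = longCount M := by
    have h2n : {2 * n, 2 * n + 1} ∉ M := fun h =>
      by simpa using hM.subset_of_mem h (mem_insert_of_mem (mem_singleton_self _))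
    simp [longCount_insertPair hM.1, isLong_pair_iff, h2n]
  rw [natCast_card_filter, sum_range_succ,
    ← sum_filter_add_sum_filter_not (range (2 * n)) fun j => {j, j + 1} ∈ M,
    sum_eq_card_nsmul fun j hj => by
      rw [hcount j (mem_range.1 (mem_filter.1 hj).1), if_pos (mem_filter.1 hj).2],
    sum_eq_card_nsmul fun j hj => by
      rw [hcount j (mem_range.1 (mem_filter.1 hj).1), if_neg (mem_filter.1 hj).2],
    htop]
  push_cast
  split_ifs <;> simp <;> omega

theorem matchCount_succ (n : ℕ) (k : ℤ) :
    (matchCount (n + 1) k : ℤ) = matchCount n k + (n + k - 1) * matchCount n (k - 1)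
      + (n - k + 2) * matchCount n (k - 2) := by
  simp only [matchCount_eq_card, natCast_card_filter]
  rw [sum_matchings_succ, sum_congr rfl fun M hM => by
    rw [← natCast_card_filter, card_filter_longCount_insertPair (mem_matchings.1 hM)]]
  rw [sum_add_distrib, sum_add_distrib, ← mul_sum, ← mul_sum]

theorem longCount_le {n : ℕ} {M : Finset (Finset ℕ)} (hM : IsMatchingOn (Icc 1 (2 * n)) M) :
    longCount M ≤ n :=
  (card_pairs_succ_mem_add_longCount hM).le.trans' (Nat.le_add_left _ _)

theorem matchCount_eq_zero {n : ℕ} {k : ℤ} (hk : k < 0 ∨ (n : ℤ) < k) : matchCount n k = 0 := by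
  rw [matchCount_eq_card, card_eq_zero, filter_eq_empty_iff]
  intro M hM
  have := longCount_le (mem_matchings.1 hM)
  omega

theorem matchings_zero : matchings 0 = {∅} := by
  ext M
  rw [mem_matchings, mem_singleton]
  constructor
  · intro hM
    simpa using hM.two_mul_card
  · rintro rfl
    exact ⟨by simp, by simp, by simp⟩

theorem matchCount_zero_right (n : ℕ) : matchCount n 0 = 1 := by
  induction n with
  | zero => simp [matchCount_eq_card, matchings_zero, longCount, filter_singleton]
  | succ n ih =>
    have h := matchCount_succ n 0
    rw [ih, matchCount_eq_zero (k := 0 - 1) (by omega), matchCount_eq_zero (k := 0 - 2) (by omega)]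
      at h
    omega

theorem stmt14 :
    (∀ n : ℕ, 1 ≤ n → ∀ k : ℤ,
      (matchCount n k : ℤ) = matchCount (n - 1) k
        + ((n : ℤ) + k - 2) * matchCount (n - 1) (k - 1)
        + ((n : ℤ) - k + 1) * matchCount (n - 1) (k - 2)) ∧
    (∀ (n : ℕ) (k : ℤ), k < 0 ∨ (n : ℤ) < k → matchCount n k = 0) ∧
    (∀ n : ℕ, matchCount n 0 = 1) := by
  refine ⟨fun n hn k => ?_, fun n k => matchCount_eq_zero, matchCount_zero_right⟩
  obtain ⟨n, rfl⟩ := Nat.exists_eq_add_of_le' hn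
  rw [Nat.add_sub_cancel, matchCount_succ]
  push_cast
  ring
end

section
/- Let T be a tree whose vertex set is a subset of [1,n]. Suppose T contains a path v₁,…,v_k with k ≥ 4 satisfying max(v₁,…,v_k)=v₁, max(v₂,…,v_k)=v_k, and v₂ > v_{k−1}. Then T contains a path w₀, w₁, …, w_{k−1} obtained by reindexing so that the path, viewed as starting at v_k, realizes T as the leading tree of the wheel W(v_k; v₁, v₂, …, v_{k−1}); in particular, among the two Hamiltonian paths of this wheel with prescribed spoke valences, the given path contains the lexicographically largest edge of their symmetric difference, namely v_{k−1}v_k. -/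
/-- The graded-lex order on edges of `K_n` restricted to single edges:
`e ≻ f` iff `min e < min f`, or the minima agree and `max e < max f`
(so `12 ≻ 13 ≻ ⋯ ≻ 1n ≻ 23 ≻ ⋯`). -/
def edgeGT (e f : Sym2 ℕ) : Prop :=
  e.inf < f.inf ∨ (e.inf = f.inf ∧ e.sup < f.sup)

/-- For edge sets of equal size, `E ≻ F` iff the greatest edge of the
symmetric difference `E △ F` belongs to `E`. -/
def edgeSetGT (E F : Set (Sym2 ℕ)) : Prop :=
  ∃ e, e ∈ E ∧ e ∉ F ∧ ∀ f ∈ (E \ F) ∪ (F \ E), f ≠ e → edgeGT e f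

/-- `T` is a spanning tree of the vertex set `S`: all edges of `T` lie within
`S`, `T` is acyclic, and any two vertices of `S` are joined by a walk using
only edges of `T`. -/
def IsSpanningTreeOn (S : Set ℕ) (T : Set (Sym2 ℕ)) : Prop :=
  (∀ e ∈ T, ∀ x ∈ e, x ∈ S) ∧ (SimpleGraph.fromEdgeSet T).IsAcyclic ∧
    ∀ a ∈ S, ∀ b ∈ S, (SimpleGraph.fromEdgeSet T).Reachable a b

/-- The edge set of the wheel with center `c` and spokes `w 0, …, w (r-1)`
(in cyclic order): radii `{c, w i}` and chords `{w i, w ((i+1) % r)}`. -/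
def wheelE (c : ℕ) (w : ℕ → ℕ) (r : ℕ) : Set (Sym2 ℕ) :=
  {e | ∃ i < r, e = s(c, w i) ∨ e = s(w i, w ((i + 1) % r))}

/-- The edge set of the path `v 0, v 1, …, v (k-1)`. -/
def pathE (v : ℕ → ℕ) (k : ℕ) : Set (Sym2 ℕ) :=
  {e | ∃ i, i + 1 < k ∧ e = s(v i, v (i + 1))}

/-- The edge set of the other Hamiltonian path
`v (k-1), v 1, v 2, …, v (k-2), v 0` of the wheel with center `v (k-1)` and
the same spoke valences. -/
def altPathE (v : ℕ → ℕ) (k : ℕ) : Set (Sym2 ℕ) :=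
  {e | e = s(v (k - 1), v 1) ∨ e = s(v (k - 2), v 0) ∨
    ∃ i, 1 ≤ i ∧ i + 2 < k ∧ e = s(v i, v (i + 1))}

/-!
Write `W` for the wheel with centre `v r` and rim `v 0, …, v (r - 1)`, and `P` for the path
`v 0 v 1 ⋯ v r`. The complement `W \ P` is the star at `v r` over `v 0, …, v (r - 2)` plus the
rim edge `v (r - 1) v 0`, again a spanning tree. Let `T ≠ P` be a coupled spanning tree and `f`
the largest edge of `P △ T`, so that `P` and `T` agree on all edges larger than `f`. If `f` lay
in `T \ P`, it would be a spoke `v r v i` with `i ≤ r - 2` or the rim edge `v (r - 1) v 0`. The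
order conditions on `v` make every other edge of `W` leaving `{v i}` (for `i ≥ 2`), `{v (r - 1)}`
(for the rim edge), `{v 0, v (r - 1)}` (for `i = 0`) or `{v 0, v 1, v (r - 1)}` (for `i = 1`) an
edge of `P` larger than `f`, hence an edge of `T`; the one exception, the spoke `v r v 0` when
`i = 1`, is forced into `T` by the connectivity of `T`. So no edge of the connected `W \ T`
leaves that set.
-/

open SimpleGraph Set

namespace SimpleGraph

variable {V : Type*} {E : Set (Sym2 V)}

theorem Reachable.exists_crossing_fromEdgeSet {B : Set V} {a b : V}
    (h : (fromEdgeSet E).Reachable a b) (ha : a ∈ B) (hb : b ∉ B) :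
    ∃ x ∈ B, ∃ y ∉ B, s(x, y) ∈ E := by
  obtain ⟨p⟩ := h
  obtain ⟨d, -, hd₁, hd₂⟩ := p.exists_boundary_dart B ha hb
  exact ⟨d.fst, hd₁, d.snd, hd₂, ((fromEdgeSet_adj E).1 d.adj).1⟩

theorem isAcyclic_fromEdgeSet_of_forall_unique_crossing
    (h : ∀ e ∈ E, ∃ B : Set V, ∃ x ∈ B, ∃ y ∉ B, e = s(x, y) ∧
      ∀ a ∈ B, ∀ b ∉ B, s(a, b) ∈ E → s(a, b) = e) :
    (fromEdgeSet E).IsAcyclic := by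
  rw [isAcyclic_iff_forall_isBridge]
  intro e he
  rw [edgeSet_fromEdgeSet] at he
  obtain ⟨B, x, hx, y, hy, rfl, huniq⟩ := h e he.1
  rw [isBridge_iff, deleteEdges_fromEdgeSet]
  intro hreach
  obtain ⟨a, ha, b, hb, hab, hne⟩ := hreach.exists_crossing_fromEdgeSet hx hy
  exact hne (huniq a ha b hb hab)

end SimpleGraph

theorem edgeGT_mk {a b c d : ℕ} :
    edgeGT s(a, b) s(c, d) ↔ min a b < min c d ∨ (min a b = min c d ∧ max a b < max c d) :=
  Iff.rfl

def edgeKey (e : Sym2 ℕ) : ℕ ×ₗ ℕ :=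
  toLex (e.inf, e.sup)

theorem edgeGT_iff_edgeKey_lt {e f : Sym2 ℕ} : edgeGT e f ↔ edgeKey e < edgeKey f :=
  (Prod.Lex.lt_iff (x := edgeKey e) (y := edgeKey f)).symm

theorem edgeKey_injective : Function.Injective edgeKey := fun _ _ h =>
  Sym2.inf_eq_inf_and_sup_eq_sup.1 (Prod.ext_iff.1 (toLex.injective h))

theorem Set.Finite.exists_forall_edgeGT {D : Set (Sym2 ℕ)} (hD : D.Finite) (hne : D.Nonempty) :
    ∃ e ∈ D, ∀ f ∈ D, f ≠ e → edgeGT e f := by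
  obtain ⟨e, he, hmin⟩ := Set.exists_min_image D edgeKey hD hne
  refine ⟨e, he, fun f hf hfe => edgeGT_iff_edgeKey_lt.2 ?_⟩
  exact (hmin f hf).lt_of_ne fun h => hfe (edgeKey_injective h).symm

def AgreeAbove (E F : Set (Sym2 ℕ)) (f : Sym2 ℕ) : Prop :=
  ∀ g, edgeGT g f → (g ∈ E ↔ g ∈ F)

theorem edgeSetGT_of_forall_not_agreeAbove {E F : Set (Sym2 ℕ)}
    (hfin : (E \ F ∪ F \ E).Finite) (hne : E ≠ F) (h : ∀ f ∈ F \ E, ¬ AgreeAbove F E f) :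
    edgeSetGT E F := by
  have hD : (E \ F ∪ F \ E).Nonempty := by
    by_contra hempty
    rw [not_nonempty_iff_eq_empty, union_empty_iff, sdiff_eq_empty, sdiff_eq_empty] at hempty
    exact hne (hempty.1.antisymm hempty.2)
  obtain ⟨e, he, hmax⟩ := hfin.exists_forall_edgeGT hD
  refine he.elim (fun he => ⟨e, he.1, he.2, hmax⟩) fun he => (h e he fun g hg => ?_).elim
  by_contra hiff
  have hgD : g ∈ E \ F ∪ F \ E := by tauto
  have hge : g ≠ e := by
    rintro rfl
    exact lt_irrefl _ (edgeGT_iff_edgeKey_lt.1 hg)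
  exact lt_asymm (edgeGT_iff_edgeKey_lt.1 hg) (edgeGT_iff_edgeKey_lt.1 (hmax g hgD hge))

section Wheel

variable {r k : ℕ} {v : ℕ → ℕ}

theorem wheelE_finite (c : ℕ) (w : ℕ → ℕ) (r : ℕ) : (wheelE c w r).Finite := by
  refine ((finite_Iio r).biUnion fun i _ => toFinite {s(c, w i), s(w i, w ((i + 1) % r))}).subset ?_
  rintro e ⟨i, hi, he⟩
  exact mem_biUnion hi he

theorem pathE_subset_wheelE : pathE v (r + 1) ⊆ wheelE (v r) v r := by
  rintro e ⟨i, hi, rfl⟩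
  rcases Nat.lt_or_ge (i + 1) r with h | h
  · exact ⟨i, by omega, Or.inr (by rw [Nat.mod_eq_of_lt h])⟩
  · obtain rfl : i + 1 = r := by omega
    exact ⟨i, by omega, Or.inl Sym2.eq_swap⟩

theorem mem_pathE_iff (hinj : InjOn v (Iio k)) {a b : ℕ} (ha : a < k) (hb : b < k) :
    s(v a, v b) ∈ pathE v k ↔ b = a + 1 ∨ a = b + 1 := by
  constructor
  · rintro ⟨i, hi, he⟩
    rcases Sym2.eq_iff.1 he with ⟨h₁, h₂⟩ | ⟨h₁, h₂⟩ <;>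
    · have := hinj ha (mem_Iio.2 (by omega)) h₁
      have := hinj hb (mem_Iio.2 (by omega)) h₂
      omega
  · rintro (rfl | rfl)
    exacts [⟨a, hb, rfl⟩, ⟨b, ha, Sym2.eq_swap⟩]

/-- Index pairs of the edges of the wheel with centre `v r`: spokes, rim edges without
wrap-around, and the wrap-around rim edge. -/
def IsWheelIdx (r a b : ℕ) : Prop :=
  (a = r ∧ b < r) ∨ (b = a + 1 ∧ b < r) ∨ (a = r - 1 ∧ b = 0)

theorem exists_isWheelIdx_of_mem_wheelE {e : Sym2 ℕ} (he : e ∈ wheelE (v r) v r) :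
    ∃ a b, IsWheelIdx r a b ∧ e = s(v a, v b) := by
  obtain ⟨i, hi, rfl | rfl⟩ := he
  · exact ⟨r, i, Or.inl ⟨rfl, hi⟩, rfl⟩
  · rcases Nat.lt_or_ge (i + 1) r with h | h
    · exact ⟨i, i + 1, Or.inr (Or.inl ⟨rfl, h⟩), by rw [Nat.mod_eq_of_lt h]⟩
    · obtain rfl : i + 1 = r := by omega
      exact ⟨i, 0, Or.inr (Or.inr ⟨rfl, rfl⟩), by rw [Nat.mod_self]⟩

theorem mem_iff_notMem_of_crossing (hinj : InjOn v (Iio k)) {I : Set ℕ} (hI : I ⊆ Iio k)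
    {x y a b : ℕ} (ha : a < k) (hb : b < k) (hx : x ∈ v '' I) (hy : y ∉ v '' I)
    (h : s(x, y) = s(v a, v b)) : a ∈ I ↔ b ∉ I := by
  rcases Sym2.eq_iff.1 h with ⟨rfl, rfl⟩ | ⟨rfl, rfl⟩
  · have := (hinj.mem_image_iff hI ha).1 hx
    have := fun hb' => hy (mem_image_of_mem v hb')
    tauto
  · have := (hinj.mem_image_iff hI hb).1 hx
    have := fun ha' => hy (mem_image_of_mem v ha')
    tauto

theorem exists_isWheelIdx_crossing {E : Set (Sym2 ℕ)} (hinj : InjOn v (Iio (r + 1)))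
    (hE : E ⊆ wheelE (v r) v r) {I : Set ℕ} (hI : I ⊆ Iio r) {i : ℕ} (hi : i ∈ I)
    (hreach : (fromEdgeSet E).Reachable (v i) (v r)) :
    ∃ a b, IsWheelIdx r a b ∧ (a ∈ I ↔ b ∉ I) ∧ s(v a, v b) ∈ E := by
  have hI' : I ⊆ Iio (r + 1) := hI.trans (Iio_subset_Iio (by omega))
  have hr : v r ∉ v '' I := fun h =>
    (hinj.mem_image_iff hI' (by simp) |>.1 h |> hI |> lt_irrefl r)
  obtain ⟨x, hx, y, hy, hxy⟩ := hreach.exists_crossing_fromEdgeSet (mem_image_of_mem v hi) hr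
  obtain ⟨a, b, hab, he⟩ := exists_isWheelIdx_of_mem_wheelE (hE hxy)
  have hab' : a < r + 1 ∧ b < r + 1 := by unfold IsWheelIdx at hab; omega
  exact ⟨a, b, hab, mem_iff_notMem_of_crossing hinj hI' hab'.1 hab'.2 hx hy he, he ▸ hxy⟩

theorem isSpanningTreeOn_pathE (hinj : InjOn v (Iio k)) :
    IsSpanningTreeOn (v '' Iio k) (pathE v k) := by
  refine ⟨?_, ?_, ?_⟩
  · rintro e ⟨i, hi, rfl⟩ x hx
    rcases Sym2.mem_iff.1 hx with rfl | rfl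
    exacts [mem_image_of_mem v (mem_Iio.2 (by omega)), mem_image_of_mem v (mem_Iio.2 (by omega))]
  · refine isAcyclic_fromEdgeSet_of_forall_unique_crossing ?_
    rintro e ⟨i, hi, rfl⟩
    refine ⟨v '' Iic i, v i, mem_image_of_mem v (mem_Iic.2 le_rfl), v (i + 1), ?_, rfl, ?_⟩
    · rw [hinj.mem_image_iff (Iic_subset_Iio.2 (by omega)) (mem_Iio.2 (by omega))]
      simp
    · rintro x hx y hy ⟨j, hj, he⟩
      have := mem_iff_notMem_of_crossing hinj (Iic_subset_Iio.2 (by omega))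
        (by omega) hj hx hy he
      simp only [mem_Iic] at this
      rw [he, show j = i by omega]
  · have hreach : ∀ i < k, (fromEdgeSet (pathE v k)).Reachable (v 0) (v i) := by
      intro i hi
      induction i with
      | zero => rfl
      | succ i ih =>
        refine (ih (by omega)).trans (Adj.reachable ?_)
        exact (fromEdgeSet_adj _).2
          ⟨⟨i, hi, rfl⟩, hinj.ne (mem_Iio.2 (by omega)) (mem_Iio.2 (by omega)) (by omega)⟩
    rintro _ ⟨i, hi, rfl⟩ _ ⟨j, hj, rfl⟩
    exact (hreach i hi).symm.trans (hreach j hj)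

def coPathE (v : ℕ → ℕ) (r : ℕ) : Set (Sym2 ℕ) :=
  {e | ∃ i < r - 1, e = s(v r, v i)} ∪ {s(v (r - 1), v 0)}

theorem wheelE_diff_pathE (hr : 3 ≤ r) (hinj : InjOn v (Iio (r + 1))) :
    wheelE (v r) v r \ pathE v (r + 1) = coPathE v r := by
  ext e
  constructor
  · rintro ⟨hW, hP⟩
    obtain ⟨a, b, hab, rfl⟩ := exists_isWheelIdx_of_mem_wheelE hW
    unfold IsWheelIdx at hab
    rw [mem_pathE_iff hinj (by omega) (by omega)] at hP
    rcases hab with ⟨rfl, hb⟩ | ⟨rfl, hb⟩ | ⟨rfl, rfl⟩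
    · exact Or.inl ⟨b, by omega, rfl⟩
    · exact (hP (Or.inl rfl)).elim
    · exact Or.inr rfl
  · rintro (⟨i, hi, rfl⟩ | rfl)
    · refine ⟨⟨i, by omega, Or.inl rfl⟩, ?_⟩
      rw [mem_pathE_iff hinj (by omega) (by omega)]
      omega
    · refine ⟨⟨r - 1, by omega, Or.inr ?_⟩, ?_⟩
      · rw [Nat.sub_add_cancel (by omega), Nat.mod_self]
      · rw [mem_pathE_iff hinj (by omega) (by omega)]
        omega

theorem isAcyclic_coPathE (hr : 2 ≤ r) (hinj : InjOn v (Iio (r + 1))) :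
    (fromEdgeSet (coPathE v r)).IsAcyclic := by
  refine isAcyclic_fromEdgeSet_of_forall_unique_crossing ?_
  -- The spoke `v r v i` is the only edge leaving `{v i}`, or `{v 0, v (r - 1)}` when `i = 0`.
  rintro e (⟨i, hi, rfl⟩ | rfl)
  · have hI : {j | j = i ∨ (i = 0 ∧ j = r - 1)} ⊆ Iio (r + 1) := fun j hj => by
      exact mem_Iio.2 (by simp only [mem_ofPred_eq] at hj; omega)
    refine ⟨v '' {j | j = i ∨ (i = 0 ∧ j = r - 1)}, v i, mem_image_of_mem v (Or.inl rfl),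
      v r, ?_, Sym2.eq_swap, ?_⟩
    · rw [hinj.mem_image_iff hI (by simp)]
      simp only [mem_ofPred_eq]
      omega
    · rintro x hx y hy (⟨j, hj, he⟩ | he)
      · have := mem_iff_notMem_of_crossing hinj hI (by omega) (by omega) hx hy he
        simp only [mem_ofPred_eq] at this
        rw [he, show j = i by omega]
      · have := mem_iff_notMem_of_crossing hinj hI (by omega) (by omega) hx hy he
        simp only [mem_ofPred_eq, and_true] at this
        exact absurd this (by omega)
  · have hI : {r - 1} ⊆ Iio (r + 1) := by simp
    refine ⟨v '' {r - 1}, v (r - 1), mem_image_of_mem v rfl, v 0, ?_, rfl, ?_⟩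
    · rw [hinj.mem_image_iff hI (by simp)]
      simp only [mem_singleton_iff]
      omega
    · rintro x hx y hy (⟨j, hj, he⟩ | he)
      · have := mem_iff_notMem_of_crossing hinj hI (by omega) (by omega) hx hy he
        simp only [mem_singleton_iff] at this
        omega
      · exact he

theorem isSpanningTreeOn_coPathE (hr : 2 ≤ r) (hinj : InjOn v (Iio (r + 1))) :
    IsSpanningTreeOn (v '' Iio (r + 1)) (coPathE v r) := by
  have hS : ∀ i ≤ r, v i ∈ v '' Iio (r + 1) := fun i hi =>
    mem_image_of_mem v (mem_Iio.2 (by omega))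
  refine ⟨?_, isAcyclic_coPathE hr hinj, ?_⟩
  · rintro e (⟨i, hi, rfl⟩ | rfl) x hx <;> rcases Sym2.mem_iff.1 hx with rfl | rfl
    exacts [hS r le_rfl, hS i (by omega), hS (r - 1) (by omega), hS 0 (by omega)]
  · have hadj : ∀ i < r - 1, (fromEdgeSet (coPathE v r)).Adj (v i) (v r) := fun i hi =>
      (fromEdgeSet_adj _).2 ⟨Or.inl ⟨i, hi, Sym2.eq_swap⟩,
        hinj.ne (mem_Iio.2 (by omega)) (by simp) (by omega)⟩
    have hreach : ∀ i ≤ r, (fromEdgeSet (coPathE v r)).Reachable (v i) (v r) := by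
      intro i hi
      obtain hi' | rfl | rfl : i < r - 1 ∨ i = r - 1 ∨ i = r := by omega
      · exact (hadj i hi').reachable
      · refine Adj.reachable ?_ |>.trans (hadj 0 (by omega)).reachable
        exact (fromEdgeSet_adj _).2 ⟨Or.inr rfl, hinj.ne (by simp) (by simp) (by omega)⟩
      · rfl
    rintro _ ⟨i, hi, rfl⟩ _ ⟨j, hj, rfl⟩
    exact (hreach i (Nat.le_of_lt_succ hi)).trans (hreach j (Nat.le_of_lt_succ hj)).symm

end Wheel

def IsCoupledTree (S : Set ℕ) (W T : Set (Sym2 ℕ)) : Prop :=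
  T ⊆ W ∧ IsSpanningTreeOn S T ∧ IsSpanningTreeOn S (W \ T)

namespace IsCoupledTree

variable {r : ℕ} {v : ℕ → ℕ} {T : Set (Sym2 ℕ)}

theorem exists_crossing_mem (hT : IsCoupledTree (v '' Iio (r + 1)) (wheelE (v r) v r) T)
    (hinj : InjOn v (Iio (r + 1))) {I : Set ℕ} (hI : I ⊆ Iio r) {i : ℕ} (hi : i ∈ I) :
    ∃ a b, IsWheelIdx r a b ∧ (a ∈ I ↔ b ∉ I) ∧ s(v a, v b) ∈ T :=
  exists_isWheelIdx_crossing hinj hT.1 hI hi <| hT.2.1.2.2 _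
    (mem_image_of_mem v (Iio_subset_Iio (Nat.le_succ r) (hI hi))) _ (mem_image_of_mem v (by simp))

theorem exists_crossing_notMem (hT : IsCoupledTree (v '' Iio (r + 1)) (wheelE (v r) v r) T)
    (hinj : InjOn v (Iio (r + 1))) {I : Set ℕ} (hI : I ⊆ Iio r) {i : ℕ} (hi : i ∈ I) :
    ∃ a b, IsWheelIdx r a b ∧ (a ∈ I ↔ b ∉ I) ∧ s(v a, v b) ∉ T := by
  obtain ⟨a, b, hab, hcross, hmem⟩ := exists_isWheelIdx_crossing hinj sdiff_subset hI hi <|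
    hT.2.2.2.2 _ (mem_image_of_mem v (Iio_subset_Iio (Nat.le_succ r) (hI hi))) _
      (mem_image_of_mem v (by simp))
  exact ⟨a, b, hab, hcross, hmem.2⟩

end IsCoupledTree

-- Condition (ii) for the path `v 0, …, v r`, that is, with `k = r + 1`.
structure IsAdmissiblePath (r : ℕ) (v : ℕ → ℕ) : Prop where
  three_le : 3 ≤ r
  injOn : InjOn v (Iio (r + 1))
  le_first : ∀ i < r + 1, v i ≤ v 0
  le_last : ∀ i, 1 ≤ i → i < r + 1 → v i ≤ v r
  lt_second : v (r - 1) < v 1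

namespace IsAdmissiblePath

variable {r : ℕ} {v : ℕ → ℕ} {T : Set (Sym2 ℕ)}

theorem lt_first (hv : IsAdmissiblePath r v) {i : ℕ} (h1 : 1 ≤ i) (hi : i ≤ r) : v i < v 0 :=
  (hv.le_first i (by omega)).lt_of_ne (hv.injOn.ne (mem_Iio.2 (by omega)) (by simp) (by omega))

theorem lt_last (hv : IsAdmissiblePath r v) {i : ℕ} (h1 : 1 ≤ i) (hi : i < r) : v i < v r :=
  (hv.le_last i h1 (by omega)).lt_of_ne (hv.injOn.ne (mem_Iio.2 (by omega)) (by simp) (by omega))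

theorem mem_of_agreeAbove (hv : IsAdmissiblePath r v) {f : Sym2 ℕ}
    (hagree : AgreeAbove T (pathE v (r + 1)) f) {a b : ℕ} (ha : a ≤ r) (hb : b ≤ r)
    (hab : b = a + 1 ∨ a = b + 1) (hg : edgeGT s(v a, v b) f) : s(v a, v b) ∈ T :=
  (hagree _ hg).2 ((mem_pathE_iff hv.injOn (by omega) (by omega)).2 hab)

theorem not_agreeAbove_spoke_zero (hv : IsAdmissiblePath r v)
    (hT : IsCoupledTree (v '' Iio (r + 1)) (wheelE (v r) v r) T) (hf : s(v r, v 0) ∈ T) :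
    ¬ AgreeAbove T (pathE v (r + 1)) s(v r, v 0) := by
  intro hagree
  have hr := hv.three_le
  have h1 := hv.lt_last (i := 1) le_rfl (by omega)
  have hlast := hv.lt_last (i := r - 1) (by omega) (by omega)
  have hr0 := hv.lt_first (i := r) (by omega) le_rfl
  obtain ⟨a, b, hab, hcross, hb⟩ :=
    hT.exists_crossing_notMem hv.injOn (I := {0, r - 1})
      (by simp only [insert_subset_iff, singleton_subset_iff, mem_Iio]; omega) (mem_insert 0 _)
  unfold IsWheelIdx at hab
  simp only [mem_insert_iff, mem_singleton_iff] at hcross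
  obtain ⟨rfl, rfl⟩ | ⟨rfl, rfl⟩ | ⟨rfl, rfl⟩ | ⟨rfl, rfl⟩ :
      (a = r ∧ b = 0) ∨ (a = r ∧ b = r - 1) ∨ (a = 0 ∧ b = 1) ∨
        (a = r - 2 ∧ b = r - 1) := by
    omega
  · exact hb hf
  all_goals
    exact hb (hv.mem_of_agreeAbove hagree (by omega) (by omega) (by omega)
      (by rw [edgeGT_mk]; omega))

-- `W \ T` can only leave `{v 1}` through `v 0 v 1`, so `T` can only leave `{v 0}` through
-- the spoke.
theorem spoke_zero_mem_of_agreeAbove_spoke_one (hv : IsAdmissiblePath r v)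
    (hT : IsCoupledTree (v '' Iio (r + 1)) (wheelE (v r) v r) T) (hf : s(v r, v 1) ∈ T)
    (hagree : AgreeAbove T (pathE v (r + 1)) s(v r, v 1)) : s(v r, v 0) ∈ T := by
  have hr := hv.three_le
  have h1 := hv.lt_last (i := 1) le_rfl (by omega)
  have h2 := hv.lt_last (i := 2) (by omega) (by omega)
  have hlast0 := hv.lt_first (i := r - 1) (by omega) (by omega)
  have hsecond := hv.lt_second
  have h01 : s(v 0, v 1) ∉ T := by
    obtain ⟨a, b, hab, hcross, hb⟩ :=
      hT.exists_crossing_notMem hv.injOn (I := {1})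
        (by simp only [singleton_subset_iff, mem_Iio]; omega) rfl
    unfold IsWheelIdx at hab
    simp only [mem_singleton_iff] at hcross
    obtain ⟨rfl, rfl⟩ | ⟨rfl, rfl⟩ | ⟨rfl, rfl⟩ :
        (a = r ∧ b = 1) ∨ (a = 1 ∧ b = 2) ∨ (a = 0 ∧ b = 1) := by omega
    · exact (hb hf).elim
    · exact (hb (hv.mem_of_agreeAbove hagree (by omega) (by omega) (by omega)
        (by rw [edgeGT_mk]; omega))).elim
    · exact hb
  have hwrap : s(v (r - 1), v 0) ∉ T := fun h => by
    have := (hagree _ (by rw [edgeGT_mk]; omega)).1 h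
    rw [mem_pathE_iff hv.injOn (by omega) (by omega)] at this
    omega
  obtain ⟨a, b, hab, hcross, hb⟩ :=
    hT.exists_crossing_mem hv.injOn (I := {0})
      (by simp only [singleton_subset_iff, mem_Iio]; omega) rfl
  unfold IsWheelIdx at hab
  simp only [mem_singleton_iff] at hcross
  obtain ⟨rfl, rfl⟩ | ⟨rfl, rfl⟩ | ⟨rfl, rfl⟩ :
      (a = r ∧ b = 0) ∨ (a = 0 ∧ b = 1) ∨ (a = r - 1 ∧ b = 0) := by omega
  exacts [hb, (h01 hb).elim, (hwrap hb).elim]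

theorem not_agreeAbove_spoke_one (hv : IsAdmissiblePath r v)
    (hT : IsCoupledTree (v '' Iio (r + 1)) (wheelE (v r) v r) T) (hf : s(v r, v 1) ∈ T) :
    ¬ AgreeAbove T (pathE v (r + 1)) s(v r, v 1) := by
  intro hagree
  have hr := hv.three_le
  have h1 := hv.lt_last (i := 1) le_rfl (by omega)
  have h2 := hv.lt_last (i := 2) (by omega) (by omega)
  have hlast := hv.lt_last (i := r - 1) (by omega) (by omega)
  have hsecond := hv.lt_second
  obtain ⟨a, b, hab, hcross, hb⟩ := hT.exists_crossing_notMem hv.injOn (I := {0, 1, r - 1})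
    (by simp only [insert_subset_iff, singleton_subset_iff, mem_Iio]; omega) (mem_insert 0 _)
  unfold IsWheelIdx at hab
  simp only [mem_insert_iff, mem_singleton_iff] at hcross
  obtain ⟨rfl, rfl⟩ | ⟨rfl, rfl⟩ | ⟨rfl, rfl⟩ | ⟨rfl, rfl⟩ | ⟨rfl, rfl⟩ :
      (a = r ∧ b = 0) ∨ (a = r ∧ b = 1) ∨ (a = 1 ∧ b = 2) ∨ (a = r ∧ b = r - 1) ∨
        (a = r - 2 ∧ b = r - 1) := by
    omega
  · exact hb (hv.spoke_zero_mem_of_agreeAbove_spoke_one hT hf hagree)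
  · exact hb hf
  all_goals
    exact hb (hv.mem_of_agreeAbove hagree (by omega) (by omega) (by omega)
      (by rw [edgeGT_mk]; omega))

theorem not_agreeAbove_spoke (hv : IsAdmissiblePath r v)
    (hT : IsCoupledTree (v '' Iio (r + 1)) (wheelE (v r) v r) T) {i : ℕ} (h2 : 2 ≤ i)
    (hi : i < r - 1) (hf : s(v r, v i) ∈ T) : ¬ AgreeAbove T (pathE v (r + 1)) s(v r, v i) := by
  intro hagree
  have hprev := hv.lt_last (i := i - 1) (by omega) (by omega)
  have hcur := hv.lt_last (i := i) (by omega) (by omega)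
  have hnext := hv.lt_last (i := i + 1) (by omega) (by omega)
  obtain ⟨a, b, hab, hcross, hb⟩ :=
    hT.exists_crossing_notMem hv.injOn (I := {i})
      (by simp only [singleton_subset_iff, mem_Iio]; omega) rfl
  unfold IsWheelIdx at hab
  simp only [mem_singleton_iff] at hcross
  obtain ⟨rfl, rfl⟩ | ⟨rfl, rfl⟩ | ⟨rfl, rfl⟩ :
      (a = r ∧ b = i) ∨ (a = i - 1 ∧ b = i) ∨ (a = i ∧ b = i + 1) := by omega
  · exact hb hf
  all_goals
    exact hb (hv.mem_of_agreeAbove hagree (by omega) (by omega) (by omega)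
      (by rw [edgeGT_mk]; omega))

theorem not_agreeAbove_wrap (hv : IsAdmissiblePath r v)
    (hT : IsCoupledTree (v '' Iio (r + 1)) (wheelE (v r) v r) T)
    (hf : s(v (r - 1), v 0) ∈ T) : ¬ AgreeAbove T (pathE v (r + 1)) s(v (r - 1), v 0) := by
  intro hagree
  have hr := hv.three_le
  have hprev := hv.lt_first (i := r - 2) (by omega) (by omega)
  have hlast := hv.lt_first (i := r - 1) (by omega) (by omega)
  have hlast' := hv.lt_last (i := r - 1) (by omega) (by omega)
  have hr0 := hv.lt_first (i := r) (by omega) le_rfl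
  obtain ⟨a, b, hab, hcross, hb⟩ :=
    hT.exists_crossing_notMem hv.injOn (I := {r - 1})
      (by simp only [singleton_subset_iff, mem_Iio]; omega) rfl
  unfold IsWheelIdx at hab
  simp only [mem_singleton_iff] at hcross
  obtain ⟨rfl, rfl⟩ | ⟨rfl, rfl⟩ | ⟨rfl, rfl⟩ :
      (a = r - 1 ∧ b = 0) ∨ (a = r ∧ b = r - 1) ∨ (a = r - 2 ∧ b = r - 1) := by omega
  · exact hb hf
  all_goals
    exact hb (hv.mem_of_agreeAbove hagree (by omega) (by omega) (by omega)
      (by rw [edgeGT_mk]; omega))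

theorem not_agreeAbove (hv : IsAdmissiblePath r v)
    (hT : IsCoupledTree (v '' Iio (r + 1)) (wheelE (v r) v r) T) {f : Sym2 ℕ}
    (hf : f ∈ T \ pathE v (r + 1)) : ¬ AgreeAbove T (pathE v (r + 1)) f := by
  have hfQ : f ∈ coPathE v r := wheelE_diff_pathE hv.three_le hv.injOn ▸ ⟨hT.1 hf.1, hf.2⟩
  obtain ⟨i, hi, rfl⟩ | rfl := hfQ
  · obtain rfl | rfl | h2 : i = 0 ∨ i = 1 ∨ 2 ≤ i := by omega
    exacts [hv.not_agreeAbove_spoke_zero hT hf.1, hv.not_agreeAbove_spoke_one hT hf.1,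
      hv.not_agreeAbove_spoke hT h2 hi hf.1]
  · exact hv.not_agreeAbove_wrap hT hf.1

theorem edgeSetGT_pathE (hv : IsAdmissiblePath r v)
    (hT : IsCoupledTree (v '' Iio (r + 1)) (wheelE (v r) v r) T) (hne : T ≠ pathE v (r + 1)) :
    edgeSetGT (pathE v (r + 1)) T :=
  edgeSetGT_of_forall_not_agreeAbove ((wheelE_finite _ _ _).subset
      (union_subset (sdiff_subset.trans pathE_subset_wheelE) (sdiff_subset.trans hT.1)))
    hne.symm fun _ hf => hv.not_agreeAbove hT hf

theorem edgeGT_of_mem_symmDiff_altPathE (hv : IsAdmissiblePath r v) :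
    ∀ f ∈ (pathE v (r + 1) \ altPathE v (r + 1)) ∪ (altPathE v (r + 1) \ pathE v (r + 1)),
      f ≠ s(v (r - 1), v r) → edgeGT s(v (r - 1), v r) f := by
  have hr := hv.three_le
  have h1 := hv.lt_last (i := 1) le_rfl (by omega)
  have hlast := hv.lt_last (i := r - 1) (by omega) (by omega)
  have h10 := hv.lt_first (i := 1) le_rfl (by omega)
  have hr0 := hv.lt_first (i := r) (by omega) le_rfl
  have hsecond := hv.lt_second
  simp only [altPathE, Nat.add_sub_cancel, show r + 1 - 2 = r - 1 by omega]
  rintro f (⟨⟨i, hi, rfl⟩, hnalt⟩ | ⟨halt, hnp⟩) hne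
  · obtain rfl | rfl : i = 0 ∨ i = r - 1 := by
      by_contra h
      exact hnalt (Or.inr (Or.inr ⟨i, by omega, by omega, rfl⟩))
    · rw [zero_add, edgeGT_mk]
      omega
    · exact absurd (by rw [Nat.sub_add_cancel (by omega)]) hne
  · rcases halt with rfl | rfl | ⟨i, hi, hir, rfl⟩
    · rw [edgeGT_mk]
      omega
    · rw [edgeGT_mk]
      omega
    · exact absurd ⟨i, by omega, rfl⟩ hnp

end IsAdmissiblePath

theorem stmt17_general (k : ℕ) (hk : 4 ≤ k) (v : ℕ → ℕ)
    (hinj : Set.InjOn v (Set.Iio k))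
    (hfirst : ∀ i < k, v i ≤ v 0)
    (hlastmax : ∀ i, 1 ≤ i → i < k → v i ≤ v (k - 1))
    (hsecond : v (k - 2) < v 1) :
    pathE v k ⊆ wheelE (v (k - 1)) v (k - 1) ∧
    IsSpanningTreeOn (v '' Set.Iio k) (pathE v k) ∧
    IsSpanningTreeOn (v '' Set.Iio k) (wheelE (v (k - 1)) v (k - 1) \ pathE v k) ∧
    (∀ T ⊆ wheelE (v (k - 1)) v (k - 1),
      IsSpanningTreeOn (v '' Set.Iio k) T →
      IsSpanningTreeOn (v '' Set.Iio k) (wheelE (v (k - 1)) v (k - 1) \ T) →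
      T ≠ pathE v k → edgeSetGT (pathE v k) T) ∧
    s(v (k - 2), v (k - 1)) ∈ pathE v k ∧
    (∀ f ∈ (pathE v k \ altPathE v k) ∪ (altPathE v k \ pathE v k),
      f ≠ s(v (k - 2), v (k - 1)) → edgeGT s(v (k - 2), v (k - 1)) f) := by
  obtain ⟨r, rfl⟩ : ∃ r, k = r + 1 := ⟨k - 1, by omega⟩
  simp only [Nat.add_sub_cancel, show r + 1 - 2 = r - 1 by omega] at hlastmax hsecond ⊢
  have hv : IsAdmissiblePath r v := ⟨by omega, hinj, hfirst, hlastmax, hsecond⟩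
  refine ⟨pathE_subset_wheelE, isSpanningTreeOn_pathE hinj,
    wheelE_diff_pathE hv.three_le hinj ▸ isSpanningTreeOn_coPathE (by omega) hinj,
    fun T hTW hT hT' hne => hv.edgeSetGT_pathE ⟨hTW, hT, hT'⟩ hne, ?_,
    hv.edgeGT_of_mem_symmDiff_altPathE⟩
  exact (mem_pathE_iff hinj (by omega) (by omega)).2 (Or.inl (by omega))

/-- (ii) ⇒ (i) of Theorem 4.5: a path `v 0, v 1, …, v (k-1)` (`k ≥ 4`, with
vertices in `[1,n]`) whose first vertex is its largest, whose last vertex is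
the largest among the rest, and with `v 1 > v (k-2)`, is the leading tree of
the wheel `W(v (k-1); v 0, …, v (k-2))`: it is a coupled spanning tree of that
wheel which beats every other coupled spanning tree in the graded-lex order.
In particular it contains the largest edge `{v (k-2), v (k-1)}` of the
symmetric difference of the two Hamiltonian paths with the prescribed spoke
valences. -/
theorem stmt17 (n k : ℕ) (hk : 4 ≤ k) (v : ℕ → ℕ)
    (hinj : Set.InjOn v (Set.Iio k))
    (hrange : ∀ i < k, 1 ≤ v i ∧ v i ≤ n)
    (hfirst : ∀ i < k, v i ≤ v 0)
    (hlastmax : ∀ i, 1 ≤ i → i < k → v i ≤ v (k - 1))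
    (hsecond : v (k - 2) < v 1) :
    pathE v k ⊆ wheelE (v (k - 1)) v (k - 1) ∧
    IsSpanningTreeOn (v '' Set.Iio k) (pathE v k) ∧
    IsSpanningTreeOn (v '' Set.Iio k) (wheelE (v (k - 1)) v (k - 1) \ pathE v k) ∧
    (∀ T ⊆ wheelE (v (k - 1)) v (k - 1),
      IsSpanningTreeOn (v '' Set.Iio k) T →
      IsSpanningTreeOn (v '' Set.Iio k) (wheelE (v (k - 1)) v (k - 1) \ T) →
      T ≠ pathE v k → edgeSetGT (pathE v k) T) ∧
    s(v (k - 2), v (k - 1)) ∈ pathE v k ∧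
    (∀ f ∈ (pathE v k \ altPathE v k) ∪ (altPathE v k \ pathE v k),
      f ≠ s(v (k - 2), v (k - 1)) → edgeGT s(v (k - 2), v (k - 1)) f) :=
  stmt17_general k hk v hinj hfirst hlastmax hsecond
end
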